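/- arXiv:2301.11918 — 9 statements merged into one kernel-verified Lean document; each statement's English description precedes it below -/
import Mathlib

section
/- For every $x\in\mathbb{R}^N\setminus\{0\}$, every $z\in\mathbb{R}^k$ and every $\varepsilon>0$, the normalized Lebesgue measure of the set $\{(l_1,\dots,l_k)\in (B_N(0,1))^k : \|Lx+z\|\le\varepsilon\}$, where $Lx=(\langle l_1,x\rangle,\dots,\langle l_k,x\rangle)$, is at most $C\,\varepsilon^k/\|x\|^k$ for a constant $C>0$ depending only on $N$ and $k$. -/
open MeasureTheory Metric Set

/-- The normalized `k`-fold product of the normalized Lebesgue measure on the closed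
unit ball of `ℝ^N`, i.e. the natural probability measure on the parameter space
`E = (B_N(0,1))^k` of linear maps `L x = (⟪l 1, x⟫, …, ⟪l k, x⟫)`. -/
noncomputable def LebE (N k : ℕ) : Measure (Fin k → EuclideanSpace ℝ (Fin N)) :=
  Measure.pi fun _ =>
    (volume (Metric.closedBall (0 : EuclideanSpace ℝ (Fin N)) 1))⁻¹ •
      volume.restrict (Metric.closedBall (0 : EuclideanSpace ℝ (Fin N)) 1)

/-!
The event forces every coordinate `⟪lᵢ, x⟫ + zᵢ` into `[-ε, ε]`, and the `lᵢ` are independent,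
so it suffices to bound the volume of one slab `{l ∈ B : |⟪l, x⟫ + a| ≤ ε}` by `2^N ε / ‖x‖`.
The reflection exchanging `x` and `‖x‖ eᵢ` preserves volume and the ball and turns the slab into
`{l ∈ B : |‖x‖ lᵢ + a| ≤ ε}`, which lies in a box of width `2ε / ‖x‖` in direction `i` and `2` in
all the others.
-/

open ProbabilityTheory
open scoped RealInnerProductSpace

section

variable {N : ℕ}

theorem EuclideanSpace.exists_linearIsometryEquiv_inner_eq_norm_mul_apply
    (x : EuclideanSpace ℝ (Fin N)) (i : Fin N) :
    ∃ R : EuclideanSpace ℝ (Fin N) ≃ₗᵢ[ℝ] EuclideanSpace ℝ (Fin N),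
      ∀ l, ⟪R l, x⟫ = ‖x‖ * l i := by
  set y := EuclideanSpace.single i ‖x‖
  have hy : ‖y‖ = ‖x‖ := by simp [y]
  set R := Submodule.reflection (ℝ ∙ (y - x))ᗮ
  refine ⟨R, fun l => ?_⟩
  calc ⟪R l, x⟫ = ⟪R l, R y⟫ := by rw [Submodule.reflection_sub hy]
    _ = ‖x‖ * l i := by
        rw [LinearIsometryEquiv.inner_map_map, EuclideanSpace.inner_single_right]
        simp

theorem EuclideanSpace.volume_closedBall_inter_abs_apply_add_le (i : Fin N) (c r : ℝ) :
    volume (closedBall 0 1 ∩ {l : EuclideanSpace ℝ (Fin N) | |l i + c| ≤ r})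
      ≤ ENNReal.ofReal (2 ^ N * r) := by
  set box : Fin N → Set ℝ := Function.update (fun _ => Icc (-1) 1) i (Icc (-c - r) (-c + r))
  have hsub : closedBall 0 1 ∩ {l : EuclideanSpace ℝ (Fin N) | |l i + c| ≤ r}
      ⊆ WithLp.ofLp ⁻¹' univ.pi box := by
    rintro l ⟨hl, hli : |l i + c| ≤ r⟩ j -
    rcases eq_or_ne j i with rfl | hj
    · have := abs_le.mp hli
      simp only [box, Function.update_self, mem_Icc]
      constructor <;> linarith
    · have : |l j| ≤ 1 := (PiLp.norm_apply_le l j).trans (by simpa using hl)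
      simpa [box, hj, abs_le] using this
  have hbox : MeasurableSet (univ.pi box) := MeasurableSet.univ_pi fun j => by
    simp only [box, Function.update_apply]; split_ifs <;> exact measurableSet_Icc
  obtain ⟨n, rfl⟩ := Nat.exists_eq_succ_of_ne_zero (Fin.pos i).ne'
  calc volume (closedBall 0 1 ∩ {l : EuclideanSpace ℝ (Fin (n + 1)) | |l i + c| ≤ r})
      ≤ volume (WithLp.ofLp ⁻¹' univ.pi box) := measure_mono hsub
    _ = volume (univ.pi box) :=
        (PiLp.volume_preserving_ofLp _).measure_preimage hbox.nullMeasurableSet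
    _ = ENNReal.ofReal (2 ^ (n + 1) * r) := by
        rw [volume_pi_pi, Fin.prod_univ_succAbove _ i]
        simp only [box, Function.update_self, Function.update_of_ne (Fin.succAbove_ne i _),
          Real.volume_Icc, Finset.prod_const, Finset.card_univ, Fintype.card_fin]
        rw [show -c + r - (-c - r) = 2 * r by ring, ENNReal.ofReal_mul zero_le_two,
          ENNReal.ofReal_mul (by positivity), ENNReal.ofReal_pow zero_le_two]
        norm_num
        ring

theorem EuclideanSpace.volume_closedBall_inter_abs_inner_add_le {x : EuclideanSpace ℝ (Fin N)}
    (hx : x ≠ 0) (a ε : ℝ) :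
    volume (closedBall 0 1 ∩ {l : EuclideanSpace ℝ (Fin N) | |⟪l, x⟫ + a| ≤ ε})
      ≤ ENNReal.ofReal (2 ^ N * ε / ‖x‖) := by
  obtain ⟨i⟩ : Nonempty (Fin N) := not_isEmpty_iff.mp fun _ => hx (Subsingleton.elim x 0)
  obtain ⟨R, hR⟩ := exists_linearIsometryEquiv_inner_eq_norm_mul_apply x i
  have hx_pos : 0 < ‖x‖ := norm_pos_iff.mpr hx
  have hpre : R ⁻¹' (closedBall 0 1 ∩ {l | |⟪l, x⟫ + a| ≤ ε})
      = closedBall 0 1 ∩ {l | |l i + a / ‖x‖| ≤ ε / ‖x‖} := by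
    ext l
    simp only [preimage_inter, mem_inter_iff, mem_preimage, mem_closedBall_zero_iff,
      LinearIsometryEquiv.norm_map, mem_ofPred_eq, hR]
    rw [le_div_iff₀ hx_pos, ← abs_of_pos hx_pos, ← abs_mul, abs_of_pos hx_pos, add_mul,
      div_mul_cancel₀ _ hx_pos.ne', mul_comm]
  calc volume (closedBall 0 1 ∩ {l : EuclideanSpace ℝ (Fin N) | |⟪l, x⟫ + a| ≤ ε})
      = volume (R ⁻¹' (closedBall 0 1 ∩ {l | |⟪l, x⟫ + a| ≤ ε})) :=
        (R.measurePreserving.measure_preimage_emb R.toMeasurableEquiv.measurableEmbedding _).symm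
    _ ≤ ENNReal.ofReal (2 ^ N * ε / ‖x‖) := by
        rw [hpre, mul_div_assoc]
        exact volume_closedBall_inter_abs_apply_add_le _ _ _

theorem EuclideanSpace.cond_closedBall_abs_inner_add_le {x : EuclideanSpace ℝ (Fin N)}
    (hx : x ≠ 0) (a ε : ℝ) :
    volume[|closedBall (0 : EuclideanSpace ℝ (Fin N)) 1] {l | |⟪l, x⟫ + a| ≤ ε}
      ≤ ENNReal.ofReal
        (2 ^ N / (volume (closedBall (0 : EuclideanSpace ℝ (Fin N)) 1)).toReal * ε / ‖x‖) := by
  set V := volume (closedBall (0 : EuclideanSpace ℝ (Fin N)) 1)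
  have hV : 0 < V.toReal :=
    ENNReal.toReal_pos (measure_closedBall_pos volume 0 one_pos).ne' measure_closedBall_lt_top.ne
  calc volume[|closedBall (0 : EuclideanSpace ℝ (Fin N)) 1] {l | |⟪l, x⟫ + a| ≤ ε}
      = V⁻¹ * volume (closedBall 0 1 ∩ {l | |⟪l, x⟫ + a| ≤ ε}) :=
        cond_apply measurableSet_closedBall _ _
    _ ≤ ENNReal.ofReal V.toReal⁻¹ * ENNReal.ofReal (2 ^ N * ε / ‖x‖) := by
        rw [ENNReal.ofReal_inv_of_pos hV, ENNReal.ofReal_toReal measure_closedBall_lt_top.ne]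
        gcongr
        exact volume_closedBall_inter_abs_inner_add_le hx a ε
    _ = ENNReal.ofReal (2 ^ N / V.toReal * ε / ‖x‖) := by
        rw [← ENNReal.ofReal_mul (inv_nonneg.mpr hV.le)]
        ring_nf

end

theorem LebE_eq_pi_cond (N k : ℕ) :
    LebE N k = Measure.pi fun _ => volume[|closedBall (0 : EuclideanSpace ℝ (Fin N)) 1] :=
  rfl

/-- For every `x ≠ 0`, `z ∈ ℝ^k` and `ε > 0`, the normalized Lebesgue measure of
`{(l₁,…,l_k) ∈ (B_N(0,1))^k : ‖L x + z‖ ≤ ε}` is at most `C ε^k / ‖x‖^k`, where `C = C(N,k)`. -/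
theorem measure_perturbation_small (N k : ℕ) :
    ∃ C > (0 : ℝ), ∀ x : EuclideanSpace ℝ (Fin N), x ≠ 0 →
      ∀ z : EuclideanSpace ℝ (Fin k), ∀ ε : ℝ, 0 < ε →
        LebE N k {l | ‖(show EuclideanSpace ℝ (Fin k) from WithLp.toLp 2 fun i => (inner ℝ (l i) x : ℝ)) + z‖ ≤ ε}
          ≤ ENNReal.ofReal (C * ε ^ k / ‖x‖ ^ k) := by
  set c := 2 ^ N / (volume (closedBall (0 : EuclideanSpace ℝ (Fin N)) 1)).toReal
  have hc : 0 < c := div_pos (by positivity) <|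
    ENNReal.toReal_pos (measure_closedBall_pos volume 0 one_pos).ne' measure_closedBall_lt_top.ne
  refine ⟨c ^ k, pow_pos hc k, fun x hx z ε hε => ?_⟩
  calc LebE N k {l | ‖(show EuclideanSpace ℝ (Fin k) from
          WithLp.toLp 2 fun i => (inner ℝ (l i) x : ℝ)) + z‖ ≤ ε}
      ≤ LebE N k (univ.pi fun i => {l | |⟪l, x⟫ + z i| ≤ ε}) :=
        measure_mono fun l hl i _ => (PiLp.norm_apply_le _ i).trans hl
    _ = ∏ i, volume[|closedBall 0 1] {l | |⟪l, x⟫ + z i| ≤ ε} := by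
        rw [LebE_eq_pi_cond, Measure.pi_pi]
    _ ≤ ∏ _i : Fin k, ENNReal.ofReal (c * ε / ‖x‖) :=
        Finset.prod_le_prod' fun i _ => EuclideanSpace.cond_closedBall_abs_inner_add_le hx (z i) ε
    _ = ENNReal.ofReal (c ^ k * ε ^ k / ‖x‖ ^ k) := by
        rw [Finset.prod_const, Finset.card_univ, Fintype.card_fin,
          ← ENNReal.ofReal_pow (by positivity), div_pow, mul_pow]
end

section
/- Let $x,y,z\in[0,1)$ have binary expansions $x=\sum_{j\ge1}x_j2^{-j}$, $y=\sum_{j\ge1}y_j2^{-j}$, $z=\sum_{j\ge1}z_j2^{-j}$ (digits in $\{0,1\}$, not eventually $1$) with $x+y=z$. If $k<m$ and $x_k=y_k=x_m=y_m=0$, then $\sum_{k\le j<m}z_j2^{-j}=\sum_{k<j<m}(x_j+y_j)2^{-j}$. -/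
open Finset

private lemma dig_le (d : ℕ → ℕ) (hd : ∀ j, d j ≤ 1) :
    ∀ j : ℕ, (d j : ℝ) / 2 ^ j ≤ 1 / 2 ^ j := fun j => by
  gcongr
  exact_mod_cast hd j

private lemma geom_shift_eq (n : ℕ) :
    ∀ j : ℕ, (1:ℝ) / 2 ^ (j + n) = (1/2)^j * (1 / 2 ^ n) := fun j => by
  rw [div_pow, one_pow, pow_add]; ring

private lemma geom_shift_summable (n : ℕ) :
    Summable (fun j : ℕ => (1:ℝ) / 2 ^ (j + n)) := by
  simp_rw [geom_shift_eq n]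
  exact summable_geometric_two.mul_right _

private lemma geom_shift_tsum (n : ℕ) :
    ∑' j : ℕ, (1:ℝ) / 2 ^ (j + n) = 2 / 2 ^ n := by
  simp_rw [geom_shift_eq n]
  rw [tsum_mul_right, tsum_geometric_two]
  ring

private lemma dig_summable' (d : ℕ → ℕ) (hd : ∀ j, d j ≤ 1) (n : ℕ) :
    Summable (fun j : ℕ => (d (j + n) : ℝ) / 2 ^ (j + n)) := by
  exact Summable.of_nonneg_of_le (fun j => by positivity)
    (fun j => dig_le d hd (j + n)) (geom_shift_summable n)

private lemma dig_summable (d : ℕ → ℕ) (hd : ∀ j, d j ≤ 1) :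
    Summable (fun j : ℕ => (d (j + 1) : ℝ) / 2 ^ (j + 1)) :=
  dig_summable' d hd 1

private lemma dig_tail_lt (d : ℕ → ℕ) (hd : ∀ j, d j ≤ 1)
    (hd1 : ¬ ∃ m, ∀ j ≥ m, d j = 1) (n : ℕ) :
    ∑' j : ℕ, (d (j + (n + 1)) : ℝ) / 2 ^ (j + (n + 1)) < 1 / 2 ^ n := by
  push_neg at hd1
  obtain ⟨i, hi, hdi⟩ := hd1 (n + 1)
  have hdi0 : d i = 0 := by have := hd i; omega
  have hlt : ∑' j : ℕ, (d (j + (n + 1)) : ℝ) / 2 ^ (j + (n + 1))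
      < ∑' j : ℕ, (1:ℝ) / 2 ^ (j + (n + 1)) := by
    apply Summable.tsum_lt_tsum (i := i - (n + 1)) (fun j => dig_le d hd (j + (n + 1))) ?_
      (dig_summable' d hd (n + 1)) (geom_shift_summable (n + 1))
    have h : i - (n + 1) + (n + 1) = i := by omega
    simp only [h, hdi0, Nat.cast_zero, zero_div]
    positivity
  calc _ < ∑' j : ℕ, (1:ℝ) / 2 ^ (j + (n + 1)) := hlt
    _ = 1 / 2 ^ n := by rw [geom_shift_tsum, pow_succ]; ring

private lemma dig_int (d : ℕ → ℕ) (n : ℕ) :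
    (2:ℝ) ^ n * ∑ j ∈ Finset.range n, (d (j + 1) : ℝ) / 2 ^ (j + 1)
      = ((∑ j ∈ Finset.range n, d (j + 1) * 2 ^ (n - 1 - j) : ℕ) : ℝ) := by
  rw [Finset.mul_sum]
  push_cast
  refine Finset.sum_congr rfl fun j hj => ?_
  rw [Finset.mem_range] at hj
  have h2 : (2:ℝ) ^ (n - 1 - j) * 2 ^ (j + 1) = 2 ^ n := by
    rw [← pow_add]; congr 1; omega
  have hne : (2:ℝ) ^ (j + 1) ≠ 0 := by positivity
  field_simp
  nlinarith [h2]

private lemma dig_reindex (d : ℕ → ℕ) (n : ℕ) :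
    ∑ j ∈ Finset.range n, (d (j + 1) : ℝ) / 2 ^ (j + 1)
      = ∑ j ∈ Finset.Ico 1 (n + 1), (d j : ℝ) / 2 ^ j := by
  rw [Finset.sum_Ico_eq_sum_range]
  simp [add_comm]

private lemma geom_Ico_lt (s t : ℕ) :
    ∑ j ∈ Finset.Ico s t, (1:ℝ) / 2 ^ j < 2 / 2 ^ s := by
  rw [Finset.sum_Ico_eq_sum_range]
  have h : ∀ i : ℕ, (1:ℝ) / 2 ^ (s + i) = (1 / 2 ^ s) * (1/2)^i := fun i => by
    rw [div_pow, one_pow, pow_add]; ring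
  simp_rw [h]
  rw [← Finset.mul_sum]
  have hg : ∑ i ∈ Finset.range (t - s), (1/2:ℝ)^i < 2 := by
    rw [geom_sum_eq (by norm_num) (t - s)]
    have h1 : ((1/2:ℝ)^(t-s) - 1)/(1/2 - 1) = 2 - 2*(1/2)^(t-s) := by ring
    have h2 : (0:ℝ) < (1/2:ℝ)^(t-s) := by positivity
    linarith
  have hp : (0:ℝ) < 1 / 2 ^ s := by positivity
  calc (1/(2:ℝ)^s) * ∑ i ∈ Finset.range (t - s), (1/2:ℝ)^i
      < (1/(2:ℝ)^s) * 2 := mul_lt_mul_of_pos_left hg hp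
    _ = 2 / 2 ^ s := by ring

private lemma dig_sum_lt (d : ℕ → ℕ) (hd : ∀ j, d j ≤ 1) (s t : ℕ) :
    ∑ j ∈ Finset.Ico s t, (d j : ℝ) / 2 ^ j < 2 / 2 ^ s := by
  calc ∑ j ∈ Finset.Ico s t, (d j : ℝ) / 2 ^ j
      ≤ ∑ j ∈ Finset.Ico s t, (1:ℝ) / 2 ^ j :=
        Finset.sum_le_sum fun j _ => dig_le d hd j
    _ < 2 / 2 ^ s := geom_Ico_lt s t
open Finset

private lemma dig_tail_lt' (d : ℕ → ℕ) (hd : ∀ j, d j ≤ 1)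
    (hd1 : ¬ ∃ m, ∀ j ≥ m, d j = 1) (n : ℕ) :
    ∑' j : ℕ, (d (j + n + 1) : ℝ) / 2 ^ (j + n + 1) < 1 / 2 ^ n := by
  simp_rw [add_assoc]
  exact dig_tail_lt d hd hd1 n

private lemma int_cast_eq_zero {r : ℝ} (N : ℤ) (hN : r = (N : ℝ))
    (h1 : r < 1) (h2 : -1 < r) : r = 0 := by
  rw [hN] at h1 h2 ⊢
  have h1' : N < 1 := by exact_mod_cast h1
  have h2' : -1 < N := by exact_mod_cast h2
  have hN0 : N = 0 := by omega
  simp [hN0]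

set_option maxHeartbeats 1200000 in
/-- If `x, y, z ∈ [0,1)` have binary expansions (digits in `{0,1}`,
not eventually `1`), `x + y = z`, `k < m`, and the `k`-th and `m`-th digits of
both `x` and `y` vanish, then
`∑_{k ≤ j < m} z_j 2^{-j} = ∑_{k < j < m} (x_j + y_j) 2^{-j}`. -/
theorem dyadic_block_sum_eq (a b c : ℕ → ℕ)
    (ha : ∀ j, a j ≤ 1) (hb : ∀ j, b j ≤ 1) (hc : ∀ j, c j ≤ 1)
    (ha1 : ¬ ∃ m, ∀ j ≥ m, a j = 1)
    (hb1 : ¬ ∃ m, ∀ j ≥ m, b j = 1)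
    (hc1 : ¬ ∃ m, ∀ j ≥ m, c j = 1)
    (x y z : ℝ)
    (hx0 : x ∈ Set.Ico (0 : ℝ) 1) (hy0 : y ∈ Set.Ico (0 : ℝ) 1) (hz0 : z ∈ Set.Ico (0 : ℝ) 1)
    (hx : x = ∑' j : ℕ, (a (j + 1) : ℝ) / 2 ^ (j + 1))
    (hy : y = ∑' j : ℕ, (b (j + 1) : ℝ) / 2 ^ (j + 1))
    (hz : z = ∑' j : ℕ, (c (j + 1) : ℝ) / 2 ^ (j + 1))
    (hsum : x + y = z)
    (k m : ℕ) (hk : 1 ≤ k) (hkm : k < m)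
    (hak : a k = 0) (hbk : b k = 0) (ham : a m = 0) (hbm : b m = 0) :
    ∑ j ∈ Finset.Ico k m, (c j : ℝ) / 2 ^ j
      = ∑ j ∈ Finset.Ico (k + 1) m, ((a j : ℝ) + (b j : ℝ)) / 2 ^ j := by
  obtain ⟨k', rfl⟩ : ∃ k', k = k' + 1 := ⟨k - 1, by omega⟩
  obtain ⟨m', rfl⟩ : ∃ m', m = m' + 1 := ⟨m - 1, by omega⟩
  have hsa := dig_summable a ha
  have hsb := dig_summable b hb
  have hsc := dig_summable c hc
  -- tails
  set Ta : ℝ := ∑' j : ℕ, (a (j + (m' + 1) + 1) : ℝ) / 2 ^ (j + (m' + 1) + 1) with hTadef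
  set Tb : ℝ := ∑' j : ℕ, (b (j + (m' + 1) + 1) : ℝ) / 2 ^ (j + (m' + 1) + 1) with hTbdef
  set Tc : ℝ := ∑' j : ℕ, (c (j + m' + 1) : ℝ) / 2 ^ (j + m' + 1) with hTcdef
  have hxs : (∑ j ∈ Finset.range (m' + 1), (a (j + 1) : ℝ) / 2 ^ (j + 1)) + Ta = x := by
    rw [hx]; exact Summable.sum_add_tsum_nat_add _ hsa
  have hys : (∑ j ∈ Finset.range (m' + 1), (b (j + 1) : ℝ) / 2 ^ (j + 1)) + Tb = y := by
    rw [hy]; exact Summable.sum_add_tsum_nat_add _ hsb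
  have hzs : (∑ j ∈ Finset.range m', (c (j + 1) : ℝ) / 2 ^ (j + 1)) + Tc = z := by
    rw [hz]; exact Summable.sum_add_tsum_nat_add _ hsc
  have hTa : Ta < 1 / 2 ^ (m' + 1) := dig_tail_lt' a ha ha1 (m' + 1)
  have hTb : Tb < 1 / 2 ^ (m' + 1) := dig_tail_lt' b hb hb1 (m' + 1)
  have hTc : Tc < 1 / 2 ^ m' := dig_tail_lt' c hc hc1 m'
  have hTa0 : 0 ≤ Ta := tsum_nonneg fun j => by positivity
  have hTb0 : 0 ≤ Tb := tsum_nonneg fun j => by positivity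
  have hTc0 : 0 ≤ Tc := tsum_nonneg fun j => by positivity
  -- drop the zero top digit of a and b
  have hPa : ∑ j ∈ Finset.range (m' + 1), (a (j + 1) : ℝ) / 2 ^ (j + 1)
      = ∑ j ∈ Finset.range m', (a (j + 1) : ℝ) / 2 ^ (j + 1) := by
    rw [Finset.sum_range_succ, ham]; simp
  have hPb : ∑ j ∈ Finset.range (m' + 1), (b (j + 1) : ℝ) / 2 ^ (j + 1)
      = ∑ j ∈ Finset.range m', (b (j + 1) : ℝ) / 2 ^ (j + 1) := by
    rw [Finset.sum_range_succ, hbm]; simp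
  have hNa := dig_int a m'
  have hNb := dig_int b m'
  have hNc := dig_int c m'
  have hpow : (0 : ℝ) < 2 ^ m' := by positivity
  have hinv1 : (2 : ℝ) ^ m' * (1 / 2 ^ (m' + 1)) = 1 / 2 := by
    rw [pow_succ]; field_simp
  have hinv2 : (2 : ℝ) ^ m' * (1 / 2 ^ m') = 1 := by field_simp
  have hD : (∑ j ∈ Finset.range m', (c (j + 1) : ℝ) / 2 ^ (j + 1))
      - (∑ j ∈ Finset.range m', (a (j + 1) : ℝ) / 2 ^ (j + 1))
      - (∑ j ∈ Finset.range m', (b (j + 1) : ℝ) / 2 ^ (j + 1))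
      = Ta + Tb - Tc := by
    rw [← hPa, ← hPb]; linarith
  -- integrality at level m'
  have t1 := mul_lt_mul_of_pos_left hTa hpow
  have t2 := mul_lt_mul_of_pos_left hTb hpow
  have t3 := mul_lt_mul_of_pos_left hTc hpow
  have t4 := mul_le_mul_of_nonneg_left hTa0 (le_of_lt hpow)
  have t5 := mul_le_mul_of_nonneg_left hTb0 (le_of_lt hpow)
  have t6 := mul_le_mul_of_nonneg_left hTc0 (le_of_lt hpow)
  have hDmul : (2 : ℝ) ^ m' * (Ta + Tb - Tc)
      = ((∑ j ∈ Finset.range m', c (j + 1) * 2 ^ (m' - 1 - j) : ℕ) : ℝ)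
        - ((∑ j ∈ Finset.range m', a (j + 1) * 2 ^ (m' - 1 - j) : ℕ) : ℝ)
        - ((∑ j ∈ Finset.range m', b (j + 1) * 2 ^ (m' - 1 - j) : ℕ) : ℝ) := by
    rw [← hNa, ← hNb, ← hNc, ← hD]; ring
  have hdist1 : (2 : ℝ) ^ m' * (Ta + Tb - Tc)
      = 2 ^ m' * Ta + 2 ^ m' * Tb - 2 ^ m' * Tc := by ring
  have hzero : (2 : ℝ) ^ m' * (Ta + Tb - Tc) = 0 := by
    apply int_cast_eq_zero
      (((∑ j ∈ Finset.range m', c (j + 1) * 2 ^ (m' - 1 - j) : ℕ) : ℤ)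
        - ((∑ j ∈ Finset.range m', a (j + 1) * 2 ^ (m' - 1 - j) : ℕ) : ℤ)
        - ((∑ j ∈ Finset.range m', b (j + 1) * 2 ^ (m' - 1 - j) : ℕ) : ℤ))
    · rw [hDmul]; push_cast; ring
    · linarith
    · linarith
  have hstep1' : Ta + Tb - Tc = 0 := by
    rcases mul_eq_zero.mp hzero with h | h
    · exact absurd h (by positivity)
    · exact h
  have hstep1 : ∑ j ∈ Finset.Ico 1 (m' + 1), (c j : ℝ) / 2 ^ j
      = (∑ j ∈ Finset.Ico 1 (m' + 1), (a j : ℝ) / 2 ^ j)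
        + ∑ j ∈ Finset.Ico 1 (m' + 1), (b j : ℝ) / 2 ^ j := by
    rw [← dig_reindex, ← dig_reindex, ← dig_reindex]; linarith
  -- step 2 : cut at k'+1
  have hca := Finset.sum_Ico_consecutive (fun j => (a j : ℝ) / 2 ^ j)
    (by omega : 1 ≤ k' + 1) (by omega : k' + 1 ≤ m' + 1)
  have hcb := Finset.sum_Ico_consecutive (fun j => (b j : ℝ) / 2 ^ j)
    (by omega : 1 ≤ k' + 1) (by omega : k' + 1 ≤ m' + 1)
  have hcc := Finset.sum_Ico_consecutive (fun j => (c j : ℝ) / 2 ^ j)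
    (by omega : 1 ≤ k' + 1) (by omega : k' + 1 ≤ m' + 1)
  have hE : (∑ j ∈ Finset.Ico (k' + 1) (m' + 1), (c j : ℝ) / 2 ^ j)
      - (∑ j ∈ Finset.Ico (k' + 1) (m' + 1), (a j : ℝ) / 2 ^ j)
      - (∑ j ∈ Finset.Ico (k' + 1) (m' + 1), (b j : ℝ) / 2 ^ j)
      = (∑ j ∈ Finset.Ico 1 (k' + 1), (a j : ℝ) / 2 ^ j)
        + (∑ j ∈ Finset.Ico 1 (k' + 1), (b j : ℝ) / 2 ^ j)
        - (∑ j ∈ Finset.Ico 1 (k' + 1), (c j : ℝ) / 2 ^ j) := by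
    linarith
  -- drop bottom zero digits of a and b
  have hda := Finset.sum_eq_sum_Ico_succ_bot (by omega : k' + 1 < m' + 1)
    (fun j => (a j : ℝ) / 2 ^ j)
  have hdb := Finset.sum_eq_sum_Ico_succ_bot (by omega : k' + 1 < m' + 1)
    (fun j => (b j : ℝ) / 2 ^ j)
  simp only [hak, hbk, Nat.cast_zero, zero_div, zero_add] at hda hdb
  -- bounds
  have hSc := dig_sum_lt c hc (k' + 1) (m' + 1)
  have hSa := dig_sum_lt a ha (k' + 1 + 1) (m' + 1)
  have hSb := dig_sum_lt b hb (k' + 1 + 1) (m' + 1)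
  have hSc0 : (0:ℝ) ≤ ∑ j ∈ Finset.Ico (k' + 1) (m' + 1), (c j : ℝ) / 2 ^ j :=
    Finset.sum_nonneg fun j _ => by positivity
  have hSa0 : (0:ℝ) ≤ ∑ j ∈ Finset.Ico (k' + 1) (m' + 1), (a j : ℝ) / 2 ^ j :=
    Finset.sum_nonneg fun j _ => by positivity
  have hSb0 : (0:ℝ) ≤ ∑ j ∈ Finset.Ico (k' + 1) (m' + 1), (b j : ℝ) / 2 ^ j :=
    Finset.sum_nonneg fun j _ => by positivity
  -- heads are integer multiples of 2^{-k'}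
  have hNa' := dig_int a k'
  have hNb' := dig_int b k'
  have hNc' := dig_int c k'
  rw [dig_reindex a k'] at hNa'
  rw [dig_reindex b k'] at hNb'
  rw [dig_reindex c k'] at hNc'
  have hpk : (0 : ℝ) < 2 ^ k' := by positivity
  have hq1 : (2 : ℝ) ^ k' * (2 / 2 ^ (k' + 1)) = 1 := by
    rw [pow_succ]; field_simp
  have hq2 : (2 : ℝ) ^ k' * (2 / 2 ^ (k' + 1 + 1)) = 1 / 2 := by
    rw [pow_succ, pow_succ]; field_simp
  have hEmul : (2 : ℝ) ^ k' *
      ((∑ j ∈ Finset.Ico (k' + 1) (m' + 1), (c j : ℝ) / 2 ^ j)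
      - (∑ j ∈ Finset.Ico (k' + 1) (m' + 1), (a j : ℝ) / 2 ^ j)
      - (∑ j ∈ Finset.Ico (k' + 1) (m' + 1), (b j : ℝ) / 2 ^ j))
      = ((∑ j ∈ Finset.range k', a (j + 1) * 2 ^ (k' - 1 - j) : ℕ) : ℝ)
        + ((∑ j ∈ Finset.range k', b (j + 1) * 2 ^ (k' - 1 - j) : ℕ) : ℝ)
        - ((∑ j ∈ Finset.range k', c (j + 1) * 2 ^ (k' - 1 - j) : ℕ) : ℝ) := by
    rw [hE, ← hNa', ← hNb', ← hNc']; ring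
  have s1 := mul_lt_mul_of_pos_left hSc hpk
  have s2 := mul_lt_mul_of_pos_left hSa hpk
  have s3 := mul_lt_mul_of_pos_left hSb hpk
  have s4 := mul_le_mul_of_nonneg_left hSc0 (le_of_lt hpk)
  have s5 := mul_le_mul_of_nonneg_left hSa0 (le_of_lt hpk)
  have s6 := mul_le_mul_of_nonneg_left hSb0 (le_of_lt hpk)
  rw [← hda] at s2
  rw [← hdb] at s3
  have hdist2 : (2 : ℝ) ^ k' *
      ((∑ j ∈ Finset.Ico (k' + 1) (m' + 1), (c j : ℝ) / 2 ^ j)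
      - (∑ j ∈ Finset.Ico (k' + 1) (m' + 1), (a j : ℝ) / 2 ^ j)
      - (∑ j ∈ Finset.Ico (k' + 1) (m' + 1), (b j : ℝ) / 2 ^ j))
      = 2 ^ k' * (∑ j ∈ Finset.Ico (k' + 1) (m' + 1), (c j : ℝ) / 2 ^ j)
        - 2 ^ k' * (∑ j ∈ Finset.Ico (k' + 1) (m' + 1), (a j : ℝ) / 2 ^ j)
        - 2 ^ k' * (∑ j ∈ Finset.Ico (k' + 1) (m' + 1), (b j : ℝ) / 2 ^ j) := by
    ring
  have hzero2 : (2 : ℝ) ^ k' *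
      ((∑ j ∈ Finset.Ico (k' + 1) (m' + 1), (c j : ℝ) / 2 ^ j)
      - (∑ j ∈ Finset.Ico (k' + 1) (m' + 1), (a j : ℝ) / 2 ^ j)
      - (∑ j ∈ Finset.Ico (k' + 1) (m' + 1), (b j : ℝ) / 2 ^ j)) = 0 := by
    apply int_cast_eq_zero
      (((∑ j ∈ Finset.range k', a (j + 1) * 2 ^ (k' - 1 - j) : ℕ) : ℤ)
        + ((∑ j ∈ Finset.range k', b (j + 1) * 2 ^ (k' - 1 - j) : ℕ) : ℤ)
        - ((∑ j ∈ Finset.range k', c (j + 1) * 2 ^ (k' - 1 - j) : ℕ) : ℤ))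
    · rw [hEmul]; push_cast; ring
    · linarith
    · linarith
  have hfin : (∑ j ∈ Finset.Ico (k' + 1) (m' + 1), (c j : ℝ) / 2 ^ j)
      = (∑ j ∈ Finset.Ico (k' + 1) (m' + 1), (a j : ℝ) / 2 ^ j)
        + (∑ j ∈ Finset.Ico (k' + 1) (m' + 1), (b j : ℝ) / 2 ^ j) := by
    rcases mul_eq_zero.mp hzero2 with h | h
    · exact absurd h (by positivity)
    · linarith
  simp_rw [add_div]
  rw [Finset.sum_add_distrib]
  rw [hfin, hda, hdb]
end

section
/- Let $z=x+y$, where $x,y\in[0,1)$ have binary expansions whose digits vanish at every odd position (i.e. $x_{2n-1}=y_{2n-1}=0$ for all $n\ge1$) and are not eventually $1$, and suppose $z$ has a binary expansion $z=\sum_j z_j2^{-j}$ not terminating with $1$'s. Then for every $n\ge1$ the pair $(z_{2n-1},z_{2n})$ belongs to $\{(0,0),(0,1),(1,0)\}$; moreover $(z_{2n-1},z_{2n})=(0,0)$ implies $x_{2n}=y_{2n}=0$, $(z_{2n-1},z_{2n})=(1,0)$ implies $x_{2n}=y_{2n}=1$, and $(z_{2n-1},z_{2n})=(0,1)$ implies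 exactly one of $x_{2n},y_{2n}$ equals $1$. -/
/-!
Grouping binary digits in pairs turns a binary expansion into a base-4 expansion whose digit at
block `n` is `2 z_{2n-1} + z_{2n}`. Because the odd-position digits of `x` and `y` vanish, the
base-4 digits of `x` and `y` are `x_{2n}` and `y_{2n}`, so adding them digitwise gives digits
`x_{2n} + y_{2n} ≤ 2`: no carries occur, and this is a base-4 expansion of `z` that never has
digit `3`. The base-4 expansion of `z` obtained from its binary digits is not eventually `3`
either, so uniqueness of such expansions gives `2 z_{2n-1} + z_{2n} = x_{2n} + y_{2n}` for every
`n`, which is the claimed case analysis.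
-/

open Filter

lemma Filter.Frequently.nat_succ {p : ℕ → Prop} (h : ∃ᶠ k in atTop, p k) :
    ∃ᶠ k in atTop, p (k + 1) := by
  rwa [← map_add_atTop_eq_nat 1, frequently_map] at h

noncomputable def digitExpansion (b : ℕ) (d : ℕ → ℕ) : ℝ :=
  ∑' k, (d k : ℝ) / (b : ℝ) ^ (k + 1)

namespace digitExpansion

variable {b M N : ℕ} {d e : ℕ → ℕ}

lemma nonneg (b : ℕ) (d : ℕ → ℕ) : 0 ≤ digitExpansion b d :=
  tsum_nonneg fun _ => by positivity

lemma summable (hb : 1 < b) (hd : ∀ k, d k ≤ M) :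
    Summable fun k => (d k : ℝ) / (b : ℝ) ^ (k + 1) := by
  have hb' : (1 : ℝ) < b := by exact_mod_cast hb
  refine Summable.of_nonneg_of_le (fun k => by positivity) (fun k => ?_)
    ((summable_geometric_of_lt_one (by positivity) (inv_lt_one_of_one_lt₀ hb')).mul_left (M : ℝ))
  calc (d k : ℝ) / (b : ℝ) ^ (k + 1) ≤ M / (b : ℝ) ^ k := by
        gcongr
        · exact_mod_cast hd k
        · exact hb'.le
        · omega
    _ = M * (b : ℝ)⁻¹ ^ k := by rw [inv_pow, div_eq_mul_inv]

lemma add (hb : 1 < b) (hd : ∀ k, d k ≤ M) (he : ∀ k, e k ≤ N) :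
    digitExpansion b (fun k => d k + e k) = digitExpansion b d + digitExpansion b e := by
  rw [digitExpansion, digitExpansion, digitExpansion, ← (summable hb hd).tsum_add (summable hb he)]
  simp only [Nat.cast_add, add_div]

lemma eq_head_add_tail (hb : 1 < b) (hd : ∀ k, d k ≤ M) :
    digitExpansion b d = (d 0 + digitExpansion b (fun k => d (k + 1))) / b := by
  rw [digitExpansion, (summable hb hd).tsum_eq_zero_add, digitExpansion, add_div,
    ← tsum_div_const]
  congr 1
  · simp
  · congr 1; ext k; rw [pow_succ _ (k + 1), div_div]

lemma const_sub_one (hb : 1 < b) : digitExpansion b (fun _ => b - 1) = 1 := by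
  have hb' : (1 : ℝ) < b := by exact_mod_cast hb
  have hterm : ∀ k, ((b - 1 : ℕ) : ℝ) / (b : ℝ) ^ (k + 1) = (b - 1) / b * (b : ℝ)⁻¹ ^ k := by
    intro k
    rw [Nat.cast_sub hb.le, inv_pow, pow_succ]
    field_simp
    push_cast
    ring
  rw [digitExpansion, tsum_congr hterm, tsum_mul_left,
    tsum_geometric_of_lt_one (by positivity) (inv_lt_one_of_one_lt₀ hb')]
  field_simp
  exact div_self (sub_ne_zero.mpr hb'.ne')

lemma lt_one (hd : ∀ k, d k < b) (hne : ∃ k, d k ≠ b - 1) : digitExpansion b d < 1 := by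
  obtain ⟨k₀, hk₀⟩ := hne
  have hb : 1 < b := by have := hd k₀; omega
  rw [← const_sub_one hb]
  refine Summable.tsum_lt_tsum (i := k₀) (fun k => ?_) ?_ (summable hb (M := b) fun k => (hd k).le)
    (summable hb (M := b) fun _ => Nat.sub_le b 1)
  · gcongr
    exact Nat.le_sub_one_of_lt (hd k)
  · gcongr
    exact lt_of_le_of_ne (Nat.le_sub_one_of_lt (hd k₀)) hk₀

lemma head_le_of_eq (hd : ∀ k, d k < b) (he : ∀ k, e k < b) (he' : ∃ k, e (k + 1) ≠ b - 1)
    (h : digitExpansion b d = digitExpansion b e) : d 0 ≤ e 0 := by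
  have hb : 1 < b := by obtain ⟨k, hk⟩ := he'; have := he (k + 1); omega
  rw [eq_head_add_tail hb (M := b) fun k => (hd k).le,
    eq_head_add_tail hb (M := b) fun k => (he k).le,
    div_left_inj' (by positivity : (b : ℝ) ≠ 0)] at h
  have htail_e := lt_one (fun k => he (k + 1)) he'
  have htail_d := nonneg b fun k => d (k + 1)
  have : (d 0 : ℝ) < e 0 + 1 := by linarith
  exact Nat.lt_add_one_iff.mp (by exact_mod_cast this)

lemma head_eq_of_eq (hd : ∀ k, d k < b) (he : ∀ k, e k < b)
    (hd' : ∃ᶠ k in atTop, d k ≠ b - 1) (he' : ∃ᶠ k in atTop, e k ≠ b - 1)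
    (h : digitExpansion b d = digitExpansion b e) : d 0 = e 0 :=
  le_antisymm (head_le_of_eq hd he he'.nat_succ.exists h)
    (head_le_of_eq he hd hd'.nat_succ.exists h.symm)

theorem inj_of_frequently_ne (hd : ∀ k, d k < b) (he : ∀ k, e k < b)
    (hd' : ∃ᶠ k in atTop, d k ≠ b - 1) (he' : ∃ᶠ k in atTop, e k ≠ b - 1)
    (h : digitExpansion b d = digitExpansion b e) : d = e := by
  funext n
  induction n generalizing d e with
  | zero => exact head_eq_of_eq hd he hd' he' h
  | succ n ih =>
    refine ih (fun k => hd (k + 1)) (fun k => he (k + 1)) hd'.nat_succ he'.nat_succ ?_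
    have hb : 1 < b := by obtain ⟨k, hk⟩ := hd'.exists; have := hd k; omega
    have h0 := head_eq_of_eq hd he hd' he' h
    rw [eq_head_add_tail hb (M := b) fun k => (hd k).le,
      eq_head_add_tail hb (M := b) fun k => (he k).le, h0] at h
    simpa [(by positivity : (b : ℝ) ≠ 0)] using h

end digitExpansion

lemma Nat.eq_sub_one_of_mul_add_eq_sq_sub_one {b x y : ℕ} (hx : x < b) (hy : y < b)
    (h : b * x + y = b ^ 2 - 1) : x = b - 1 ∧ y = b - 1 := by
  have hb : 1 ≤ b ^ 2 := by nlinarith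
  zify [hb, (by omega : 1 ≤ b)] at h ⊢
  have hx' : (x : ℤ) + 1 ≤ b := by exact_mod_cast hx
  have hy' : (y : ℤ) + 1 ≤ b := by exact_mod_cast hy
  have : (b : ℤ) ≤ x + 1 := by nlinarith
  constructor <;> nlinarith

def blockDigits (b : ℕ) (d : ℕ → ℕ) (k : ℕ) : ℕ := b * d (2 * k) + d (2 * k + 1)

namespace blockDigits

variable {b M : ℕ} {d : ℕ → ℕ}

lemma lt_sq (hd : ∀ k, d k < b) (k : ℕ) : blockDigits b d k < b ^ 2 := by
  have := hd (2 * k)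
  have := hd (2 * k + 1)
  unfold blockDigits
  nlinarith

lemma frequently_ne (hd : ∀ k, d k < b) (h : ∃ᶠ k in atTop, d k ≠ b - 1) :
    ∃ᶠ k in atTop, blockDigits b d k ≠ b ^ 2 - 1 := by
  rw [frequently_atTop] at h ⊢
  intro m
  obtain ⟨j, hjm, hj⟩ := h (2 * m)
  refine ⟨j / 2, by omega, fun hblock => hj ?_⟩
  obtain ⟨h0, h1⟩ := Nat.eq_sub_one_of_mul_add_eq_sq_sub_one (hd _) (hd _) hblock
  rcases Nat.even_or_odd' j with ⟨i, rfl | rfl⟩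
  · simpa [Nat.mul_div_cancel_left] using h0
  · simpa [Nat.mul_add_div] using h1

end blockDigits

lemma digitExpansion_sq_blockDigits {b M : ℕ} {d : ℕ → ℕ} (hb : 1 < b) (hd : ∀ k, d k ≤ M) :
    digitExpansion (b ^ 2) (blockDigits b d) = digitExpansion b d := by
  have hs := digitExpansion.summable hb hd
  have heven : Summable fun k => (d (2 * k) : ℝ) / (b : ℝ) ^ (2 * k + 1) :=
    hs.comp_injective (i := fun k => 2 * k) fun _ _ h => by simp only at h; omega
  have hodd : Summable fun k => (d (2 * k + 1) : ℝ) / (b : ℝ) ^ (2 * k + 1 + 1) :=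
    hs.comp_injective (i := fun k => 2 * k + 1) fun _ _ h => by simp only at h; omega
  have hb' : (b : ℝ) ≠ 0 := by positivity
  rw [digitExpansion, digitExpansion,
    ← tsum_even_add_odd (f := fun k => (d k : ℝ) / (b : ℝ) ^ (k + 1)) heven hodd,
    ← heven.tsum_add hodd]
  congr 1
  ext k
  simp only [blockDigits, Nat.cast_add, Nat.cast_mul, Nat.cast_pow]
  rw [← pow_mul, show 2 * (k + 1) = 2 * k + 1 + 1 by ring]
  field_simp
  ring

lemma tsum_binary_eq_digitExpansion_four {f : ℕ → ℕ} (hf : ∀ j, f j ≤ 1) :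
    ∑' j : ℕ, (f (j + 1) : ℝ) / 2 ^ (j + 1) =
      digitExpansion 4 (blockDigits 2 fun j => f (j + 1)) := by
  rw [show 4 = 2 ^ 2 from rfl, digitExpansion_sq_blockDigits one_lt_two fun j => hf (j + 1)]
  simp [digitExpansion]

theorem dyadic_block_structure_general (a b c : ℕ → ℕ)
    (ha : ∀ j, a j ≤ 1) (hb : ∀ j, b j ≤ 1) (hc : ∀ j, c j ≤ 1)
    (hc1 : ¬ ∃ m, ∀ j ≥ m, c j = 1)
    (haodd : ∀ n ≥ 1, a (2 * n - 1) = 0)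
    (hbodd : ∀ n ≥ 1, b (2 * n - 1) = 0)
    (x y z : ℝ)
    (hx : x = ∑' j : ℕ, (a (j + 1) : ℝ) / 2 ^ (j + 1))
    (hy : y = ∑' j : ℕ, (b (j + 1) : ℝ) / 2 ^ (j + 1))
    (hz : z = ∑' j : ℕ, (c (j + 1) : ℝ) / 2 ^ (j + 1))
    (hsum : x + y = z) :
    ∀ n : ℕ, 1 ≤ n →
      ((c (2 * n - 1), c (2 * n)) ∈ ({(0, 0), (0, 1), (1, 0)} : Set (ℕ × ℕ))) ∧
      (c (2 * n - 1) = 0 ∧ c (2 * n) = 0 → a (2 * n) = 0 ∧ b (2 * n) = 0) ∧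
      (c (2 * n - 1) = 1 ∧ c (2 * n) = 0 → a (2 * n) = 1 ∧ b (2 * n) = 1) ∧
      (c (2 * n - 1) = 0 ∧ c (2 * n) = 1 →
        (a (2 * n) = 1 ∧ b (2 * n) = 0) ∨ (a (2 * n) = 0 ∧ b (2 * n) = 1)) := by
  set A := blockDigits 2 fun j => a (j + 1)
  set B := blockDigits 2 fun j => b (j + 1)
  set C := blockDigits 2 fun j => c (j + 1)
  have hodd : ∀ k, a (2 * k + 1) = 0 ∧ b (2 * k + 1) = 0 := fun k =>
    ⟨haodd (k + 1) (by omega), hbodd (k + 1) (by omega)⟩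
  have hAB : ∀ k, A k + B k ≤ 2 := fun k => by
    have := hodd k; have := ha (2 * k + 1 + 1); have := hb (2 * k + 1 + 1)
    simp only [A, B, blockDigits]
    omega
  have hC : ∃ᶠ k in atTop, C k ≠ 2 ^ 2 - 1 :=
    blockDigits.frequently_ne (fun j => (hc (j + 1)).trans_lt one_lt_two)
      (Frequently.nat_succ (p := fun j => c j ≠ 2 - 1)
        (not_eventually.mp (eventually_atTop.not.mpr hc1)))
  have hCAB : C = fun k => A k + B k := by
    refine digitExpansion.inj_of_frequently_ne
      (blockDigits.lt_sq fun j => (hc (j + 1)).trans_lt one_lt_two)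
      (fun k => (hAB k).trans_lt (by norm_num)) hC
      (Frequently.of_forall fun k => by have := hAB k; omega) ?_
    rw [digitExpansion.add (by norm_num) (fun k => (Nat.le_add_right _ _).trans (hAB k))
      (fun k => (Nat.le_add_left _ _).trans (hAB k)), show 2 ^ 2 = 4 from rfl,
      ← tsum_binary_eq_digitExpansion_four ha, ← tsum_binary_eq_digitExpansion_four hb,
      ← tsum_binary_eq_digitExpansion_four hc, ← hx, ← hy, ← hz, hsum]
  intro n hn
  obtain ⟨k, rfl⟩ : ∃ k, n = k + 1 := ⟨n - 1, by omega⟩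
  have hk := congrFun hCAB k
  simp only [A, B, C, blockDigits] at hk
  rw [show 2 * (k + 1) - 1 = 2 * k + 1 by omega, show 2 * (k + 1) = 2 * k + 1 + 1 by ring]
  have := hodd k; have := hc (2 * k + 1); have := hc (2 * k + 1 + 1)
  have := ha (2 * k + 1 + 1); have := hb (2 * k + 1 + 1)
  simp only [Set.mem_insert_iff, Set.mem_singleton_iff, Prod.mk.injEq]
  omega

/-- Let `z = x + y` where `x, y ∈ [0,1)` have binary expansions whose digits
vanish at every odd position and are not eventually `1`, and let `z` have a binary expansion
not terminating with `1`'s.  Then for every `n ≥ 1` the block `(z_{2n-1}, z_{2n})` lies in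
`{(0,0), (0,1), (1,0)}`, and the digits `x_{2n}, y_{2n}` are forced as follows:
block `(0,0)` forces `x_{2n} = y_{2n} = 0`, block `(1,0)` forces `x_{2n} = y_{2n} = 1`,
and block `(0,1)` forces exactly one of `x_{2n}, y_{2n}` to equal `1`. -/
theorem dyadic_block_structure (a b c : ℕ → ℕ)
    (ha : ∀ j, a j ≤ 1) (hb : ∀ j, b j ≤ 1) (hc : ∀ j, c j ≤ 1)
    (ha1 : ¬ ∃ m, ∀ j ≥ m, a j = 1)
    (hb1 : ¬ ∃ m, ∀ j ≥ m, b j = 1)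
    (hc1 : ¬ ∃ m, ∀ j ≥ m, c j = 1)
    (haodd : ∀ n ≥ 1, a (2 * n - 1) = 0)
    (hbodd : ∀ n ≥ 1, b (2 * n - 1) = 0)
    (x y z : ℝ)
    (hx0 : x ∈ Set.Ico (0 : ℝ) 1) (hy0 : y ∈ Set.Ico (0 : ℝ) 1)
    (hx : x = ∑' j : ℕ, (a (j + 1) : ℝ) / 2 ^ (j + 1))
    (hy : y = ∑' j : ℕ, (b (j + 1) : ℝ) / 2 ^ (j + 1))
    (hz : z = ∑' j : ℕ, (c (j + 1) : ℝ) / 2 ^ (j + 1))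
    (hsum : x + y = z) :
    ∀ n : ℕ, 1 ≤ n →
      ((c (2 * n - 1), c (2 * n)) ∈ ({(0, 0), (0, 1), (1, 0)} : Set (ℕ × ℕ))) ∧
      (c (2 * n - 1) = 0 ∧ c (2 * n) = 0 → a (2 * n) = 0 ∧ b (2 * n) = 0) ∧
      (c (2 * n - 1) = 1 ∧ c (2 * n) = 0 → a (2 * n) = 1 ∧ b (2 * n) = 1) ∧
      (c (2 * n - 1) = 0 ∧ c (2 * n) = 1 →
        (a (2 * n) = 1 ∧ b (2 * n) = 0) ∨ (a (2 * n) = 0 ∧ b (2 * n) = 1)) :=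
  dyadic_block_structure_general a b c ha hb hc hc1 haodd hbodd x y z hx hy hz hsum
end

section
/- Let $X\subset\mathbb{R}^N$ be compact, $\mu$ a finite Borel measure on $X$, and $\phi:X\to\mathbb{R}^k$ continuous. If there exists a Borel set $X_\phi\subset X$ of full $\mu$-measure on which $\phi$ is injective, then for $\mu$-almost every $x\in X$ the conditional measure $\mu_{\phi(x)}$ (from the disintegration of $\mu$ with respect to $\phi$) equals the Dirac mass $\delta_x$. Conversely, if $\mu_{\phi(x)}=\delta_x$ for $\mu$-almost every $x$, then $\phi$ is injective on a Borel set of full $\mu$-measure. -/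
/-!
If `φ` is injective on a measurable set `s` of full measure, the disintegration identity
applied to `sᶜ` shows that `ν y` is carried by `s` for almost every `y`; it is also carried by
the fibre `φ⁻¹{y}`, and for `x ∈ s` the intersection `s ∩ φ⁻¹{φ x}` is `{x}`, so
`ν (φ x) = δₓ`. Conversely, `x ↦ δₓ` is injective, so `φ` is injective on any set where
`ν (φ x) = δₓ`; such a set can be taken measurable, of full measure and inside `X`.
-/

open MeasureTheory Set

section

variable {α β : Type*} [MeasurableSpace α]

lemma MeasureTheory.Measure.eq_dirac_of_measure_compl_singleton_eq_zero
    [MeasurableSingletonClass α] {ν : Measure α} [IsProbabilityMeasure ν] {x : α}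
    (h : ν {x}ᶜ = 0) : ν = Measure.dirac x := by
  have hx : ν {x} = 1 := (prob_compl_eq_zero_iff (measurableSet_singleton x)).1 h
  calc ν = ν.restrict {x} := (Measure.restrict_eq_self_of_ae_mem (ae_iff.2 h)).symm
    _ = Measure.dirac x := by rw [Measure.restrict_singleton, hx, one_smul]

lemma eq_dirac_of_injOn [MeasurableSingletonClass α] {ν : Measure α} [IsProbabilityMeasure ν]
    {φ : α → β} {s : Set α} (hinj : InjOn φ s) {x : α} (hx : x ∈ s) (hs : ν sᶜ = 0)
    (hfiber : ν (φ ⁻¹' {φ x})ᶜ = 0) : ν = Measure.dirac x := by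
  refine Measure.eq_dirac_of_measure_compl_singleton_eq_zero (measure_mono_null ?_
    (measure_union_null hs hfiber))
  intro a ha
  by_contra hmem
  simp only [mem_union, mem_compl_iff, not_or, not_not, mem_preimage, mem_singleton_iff] at hmem
  exact ha (hinj hmem.1 hx hmem.2)

lemma ae_eq_dirac_of_injOn [MeasurableSpace β] [MeasurableSingletonClass α] {μ : Measure α}
    {φ : α → β} (hφ : AEMeasurable φ μ) {ν : β → Measure α}
    (hprob : ∀ᵐ y ∂μ.map φ, IsProbabilityMeasure (ν y))
    (hfiber : ∀ᵐ y ∂μ.map φ, ν y (φ ⁻¹' {y})ᶜ = 0) {s : Set α} (hinj : InjOn φ s)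
    (hμs : μ sᶜ = 0) (hνs : ∀ᵐ y ∂μ.map φ, ν y sᶜ = 0) :
    ∀ᵐ x ∂μ, ν (φ x) = Measure.dirac x := by
  filter_upwards [ae_of_ae_map hφ hprob, ae_of_ae_map hφ hfiber, ae_of_ae_map hφ hνs,
    mem_ae_iff.2 hμs] with x hprob_x hfiber_x hνs_x hx
  exact eq_dirac_of_injOn hinj hx hνs_x hfiber_x

lemma exists_measurableSet_injOn_of_ae_eq_dirac [MeasurableSpace.SeparatesPoints α]
    {μ : Measure α} {φ : α → β} {ν : β → Measure α} (h : ∀ᵐ x ∂μ, ν (φ x) = Measure.dirac x)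
    {X : Set α} (hX : μ Xᶜ = 0) : ∃ s ⊆ X, MeasurableSet s ∧ μ sᶜ = 0 ∧ InjOn φ s := by
  obtain ⟨s, hs_ae, hs_meas, hs⟩ := (h.and (mem_ae_iff.2 hX)).exists_measurable_mem
  refine ⟨s, fun x hx ↦ (hs x hx).2, hs_meas, mem_ae_iff.1 hs_ae, ?_⟩
  intro a ha b hb hab
  have : Measure.dirac a = Measure.dirac b := by rw [← (hs a ha).1, ← (hs b hb).1, hab]
  exact injective_dirac this

end

theorem as_injectivity_iff_dirac_conditionals_general (N k : ℕ)
    (X : Set (EuclideanSpace ℝ (Fin N)))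
    (μ : Measure (EuclideanSpace ℝ (Fin N))) (hμX : μ Xᶜ = 0)
    (φ : EuclideanSpace ℝ (Fin N) → EuclideanSpace ℝ (Fin k)) (hφ : Continuous φ)
    (ν : EuclideanSpace ℝ (Fin k) → Measure (EuclideanSpace ℝ (Fin N)))
    -- (i) `ν y` is a measure on `X ∩ φ⁻¹({y})`
    (hνfiber : ∀ y, ν y (X ∩ φ ⁻¹' {y})ᶜ = 0)
    -- (ii) `ν y` is a probability measure for `φμ`-a.e. `y`
    (hνprob : ∀ᵐ y ∂(μ.map φ), IsProbabilityMeasure (ν y))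
    -- (iii) measurability and the disintegration identity
    (hνmeas : ∀ A : Set (EuclideanSpace ℝ (Fin N)), MeasurableSet A →
      Measurable (fun y => ν y A) ∧ μ A = ∫⁻ y, ν y A ∂(μ.map φ)) :
    (∃ Xφ, Xφ ⊆ X ∧ MeasurableSet Xφ ∧ μ Xφᶜ = 0 ∧ Set.InjOn φ Xφ) ↔
      (∀ᵐ x ∂μ, ν (φ x) = Measure.dirac x) := by
  refine ⟨fun ⟨Xφ, _, hXφ, hμXφ, hinj⟩ ↦ ?_,
    fun h ↦ exists_measurableSet_injOn_of_ae_eq_dirac h hμX⟩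
  have hνXφ : ∀ᵐ y ∂μ.map φ, ν y Xφᶜ = 0 := by
    obtain ⟨hmeas, hdisint⟩ := hνmeas Xφᶜ hXφ.compl
    exact (lintegral_eq_zero_iff hmeas).1 (hdisint.symm.trans hμXφ)
  have hfiber : ∀ᵐ y ∂μ.map φ, ν y (φ ⁻¹' {y})ᶜ = 0 :=
    ae_of_all _ fun y ↦ measure_mono_null (compl_subset_compl.2 inter_subset_right) (hνfiber y)
  exact ae_eq_dirac_of_injOn hφ.aemeasurable hνprob hfiber hinj hμXφ hνXφ

/-- For a probability measure `μ` on a compact set `X ⊆ ℝ^N`, a continuous map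
`φ : X → ℝ^k`, and a system `ν` of conditional measures of `μ` with respect to `φ`
(Rokhlin disintegration), `φ` is injective on some Borel set of full `μ`-measure if and
only if `ν (φ x) = δ_x` for `μ`-almost every `x ∈ X`. -/
theorem as_injectivity_iff_dirac_conditionals (N k : ℕ)
    (X : Set (EuclideanSpace ℝ (Fin N))) (hX : IsCompact X)
    (μ : Measure (EuclideanSpace ℝ (Fin N))) [IsProbabilityMeasure μ] (hμX : μ Xᶜ = 0)
    (φ : EuclideanSpace ℝ (Fin N) → EuclideanSpace ℝ (Fin k)) (hφ : Continuous φ)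
    (ν : EuclideanSpace ℝ (Fin k) → Measure (EuclideanSpace ℝ (Fin N)))
    -- (i) `ν y` is a measure on `X ∩ φ⁻¹({y})`
    (hνfiber : ∀ y, ν y (X ∩ φ ⁻¹' {y})ᶜ = 0)
    -- (ii) `ν y` is a probability measure for `φμ`-a.e. `y`
    (hνprob : ∀ᵐ y ∂(μ.map φ), IsProbabilityMeasure (ν y))
    -- (iii) measurability and the disintegration identity
    (hνmeas : ∀ A : Set (EuclideanSpace ℝ (Fin N)), MeasurableSet A →
      Measurable (fun y => ν y A) ∧ μ A = ∫⁻ y, ν y A ∂(μ.map φ)) :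
    (∃ Xφ, Xφ ⊆ X ∧ MeasurableSet Xφ ∧ μ Xφᶜ = 0 ∧ Set.InjOn φ Xφ) ↔
      (∀ᵐ x ∂μ, ν (φ x) = Measure.dirac x) :=
  as_injectivity_iff_dirac_conditionals_general N k X μ hμX φ hφ ν hνfiber hνprob hνmeas
end

section
/- Let $\mu$ be a finite Borel measure in $\mathbb{R}^N$ with compact support $X$ such that $\mathcal{H}^k(X)=0$ for some integer $1\le k\le N$, and let $\phi:X\to\mathbb{R}^k$ be Lipschitz. Then for Lebesgue-almost every linear map $L:\mathbb{R}^N\to\mathbb{R}^k$ there exists a Borel set $X_L\subset X$ of full $\mu$-measure such that $\phi_L=\phi+L$ is injective on $X_L$ and, for every $x\in X_L$ and $\varepsilon>0$, there is $\delta>0$ such that any $y\in X$ with $\|\phi_L(x)-\phi_L(y)\|\le\delta$ satisfies $\|x-y\|\le\varepsilon$. -/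
/-!
Fix `x ∈ X` and `ε > 0`. Since `H^k(X) = 0`, the points `y ∈ X` with `ε ≤ ‖x - y‖` can
be covered by sets `T_n` with `∑ (diam T_n)^k` arbitrarily small. If `φ_L y = φ_L x` for some
`y ∈ T_n`, then every row of `L` lies in a slab of width `O(diam T_n)` orthogonal to `x - y_n`, so
among bounded `L` these have measure `O((diam T_n)^k)`. Hence for each `x` the `L` for which `x`
shares its `φ_L`-value with another point of `X` form a null set, and by Fubini, for almost every
`L` the set of such `x` is `μ`-null; it is Borel because `X` is compact. Off this set `φ_L` is
injective, and the compactness of `X` upgrades injectivity at `x` to the `ε`-`δ` continuity of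
the inverse.
-/

open MeasureTheory Metric Set
open scoped NNReal ENNReal

def collisionSet {α β : Type*} (f : α → β) (s : Set α) : Set α :=
  {x ∈ s | ∃ y ∈ s, y ≠ x ∧ f y = f x}

theorem injOn_diff_collisionSet {α β : Type*} (f : α → β) (s : Set α) :
    InjOn f (s \ collisionSet f s) := by
  intro x hx y hy hxy
  by_contra hne
  exact hx.2 ⟨hx.1, y, hy.1, Ne.symm hne, hxy.symm⟩

theorem IsCompact.exists_forall_dist_le_of_mem_diff_collisionSet {α β : Type*}
    [PseudoMetricSpace α] [MetricSpace β] {f : α → β} {s : Set α} (hs : IsCompact s)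
    (hf : ContinuousOn f s) {x : α} (hx : x ∈ s \ collisionSet f s) {ε : ℝ} (hε : 0 < ε) :
    ∃ δ > 0, ∀ y ∈ s, dist (f x) (f y) ≤ δ → dist x y ≤ ε := by
  have hfar : ∀ y ∈ s ∩ {y | ε ≤ dist x y}, 0 < dist (f x) (f y) := by
    rintro y ⟨hy, hxy⟩
    refine dist_pos.mpr fun h => hx.2 ⟨hx.1, y, hy, ?_, h.symm⟩
    rintro rfl
    exact (hxy.trans_eq (dist_self y)).not_gt hε
  obtain ⟨δ, hδ, hδle⟩ := (hs.inter_right (isClosed_le continuous_const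
    (continuous_const.dist continuous_id))).exists_forall_le'
    ((continuous_const.dist continuous_id).comp_continuousOn (hf.mono inter_subset_left)) hfar
  refine ⟨δ / 2, half_pos hδ, fun y hy hxy => ?_⟩
  by_contra! hxy_far
  have : δ ≤ dist (f x) (f y) := hδle y ⟨hy, hxy_far.le⟩
  linarith

theorem IsCompact.isClosed_setOf_exists_le_dist_and_eq {P E Z : Type*} [TopologicalSpace P]
    [MetricSpace E] [TopologicalSpace Z] [T2Space Z] {F : P → E → Z} {s : Set E}
    (hs : IsCompact s) (hF : ContinuousOn (Function.uncurry F) (univ ×ˢ s)) (δ : ℝ) :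
    IsClosed {q : P × E |
      q.2 ∈ s ∧ ∃ y ∈ s, δ ≤ dist q.2 y ∧ F q.1 y = F q.1 q.2} := by
  -- The set is the projection of a closed subset of `(P × E) × s` along the compact factor `s`.
  have : CompactSpace s := isCompact_iff_compactSpace.mp hs
  set A : Set ((P × E) × s) := {q | q.1.2 ∈ s}
  have hA : IsClosed A := hs.isClosed.preimage (continuous_snd.comp continuous_fst)
  set g : (P × E) × s → Z × Z := fun q => (F q.1.1 q.2, F q.1.1 q.1.2)
  have hg : ContinuousOn g A := by
    refine ContinuousOn.prodMk ?_ ?_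
    · exact (hF.comp_continuous
        (continuous_fst.fst.prodMk (continuous_subtype_val.comp continuous_snd))
        fun q => ⟨mem_univ _, q.2.2⟩).continuousOn
    · exact hF.comp continuous_fst.continuousOn fun q hq => ⟨mem_univ _, hq⟩
  have hD : IsClosed ((A ∩ g ⁻¹' diagonal Z) ∩ {q | δ ≤ dist q.1.2 q.2}) :=
    (hg.preimage_isClosed_of_isClosed hA isClosed_diagonal).inter
      (isClosed_le continuous_const (by fun_prop))
  convert isClosedMap_fst_of_compactSpace _ hD using 1
  ext ⟨p, x⟩
  constructor
  · rintro ⟨hx, y, hy, hdist, heq⟩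
    exact ⟨((p, x), ⟨y, hy⟩), ⟨⟨hx, heq⟩, hdist⟩, rfl⟩
  · rintro ⟨⟨q, y⟩, ⟨⟨hx, heq⟩, hdist⟩, rfl⟩
    exact ⟨hx, y, y.2, hdist, heq⟩

theorem IsCompact.measurableSet_setOf_mem_collisionSet {P E Z : Type*} [TopologicalSpace P]
    [MetricSpace E] [TopologicalSpace Z] [T2Space Z] [MeasurableSpace P] [MeasurableSpace E]
    [OpensMeasurableSpace (P × E)] {F : P → E → Z} {s : Set E} (hs : IsCompact s)
    (hF : ContinuousOn (Function.uncurry F) (univ ×ˢ s)) :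
    MeasurableSet {q : P × E | q.2 ∈ collisionSet (F q.1) s} := by
  convert MeasurableSet.iUnion fun n : ℕ =>
    (hs.isClosed_setOf_exists_le_dist_and_eq hF (1 / (n + 1))).measurableSet using 1
  ext ⟨p, x⟩
  simp only [collisionSet, mem_ofPred_eq, mem_iUnion]
  constructor
  · rintro ⟨hx, y, hy, hne, heq⟩
    obtain ⟨n, hn⟩ := exists_nat_one_div_lt (dist_pos.mpr hne.symm)
    exact ⟨n, hx, y, hy, hn.le, heq⟩
  · rintro ⟨n, hx, y, hy, hdist, heq⟩
    refine ⟨hx, y, hy, ?_, heq⟩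
    rintro rfl
    rw [dist_self] at hdist
    exact hdist.not_gt Nat.one_div_pos_of_nat

theorem ae_measure_prodMk_preimage_eq_zero {α β : Type*} [MeasurableSpace α]
    [MeasurableSpace β] {μ : Measure α} {ν : Measure β} [SFinite μ] [SFinite ν]
    {s : Set (α × β)} (hs : MeasurableSet s) (h : ∀ y, μ ((fun x => (x, y)) ⁻¹' s) = 0) :
    ∀ᵐ x ∂μ, ν (Prod.mk x ⁻¹' s) = 0 :=
  (Measure.measure_prod_null hs).mp (by simp [Measure.prod_apply_symm hs, h])

theorem exists_cover_tsum_ediam_rpow_lt_of_hausdorffMeasure_eq_zero {X : Type*}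
    [EMetricSpace X] [MeasurableSpace X] [BorelSpace X] {d : ℝ} {s : Set X} (hs : μH[d] s = 0)
    {η : ℝ≥0∞} (hη : 0 < η) :
    ∃ t : ℕ → Set X, s ⊆ ⋃ n, t n ∧ (∀ n, ediam (t n) ≤ 1) ∧
      ∑' n, ⨆ _ : (t n).Nonempty, ediam (t n) ^ d < η := by
  have h := (le_iSup₂ (f := fun (r : ℝ≥0∞) (_ : 0 < r) =>
    ⨅ (t : ℕ → Set X) (_ : s ⊆ ⋃ n, t n) (_ : ∀ n, ediam (t n) ≤ r),
      ∑' n, ⨆ _ : (t n).Nonempty, ediam (t n) ^ d) 1 one_pos).trans_lt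
    ((Measure.hausdorffMeasure_apply d s).symm.trans_lt (hs ▸ hη))
  simpa only [iInf_lt_iff, exists_prop] using h

section Slices

variable {ι : Type*} [Fintype ι] {k : ℕ}

local notation "E" => EuclideanSpace ℝ ι

def rowSolutions (x : E) (f : E → EuclideanSpace ℝ (Fin k)) (T : Set E) : Set (Fin k → E) :=
  {l | ∃ y ∈ T, ∀ i, inner ℝ (l i) (x - y) = f y i}

theorem volume_abs_inner_sub_le_inter_closedBall_le {w : E} (hw : w ≠ 0) (c r R : ℝ) :
    volume ({v : E | |inner ℝ v w - c| ≤ r} ∩ closedBall 0 R) ≤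
      ENNReal.ofReal (2 * (r / ‖w‖)) * ENNReal.ofReal (2 * R) ^ (Fintype.card ι - 1) := by
  classical
  -- A reflection `T` takes the direction of `w` to a coordinate axis, so `T` maps the slab
  -- into a box.
  obtain ⟨i₀, -⟩ : ∃ i, w i ≠ 0 := by
    by_contra! h
    exact hw (PiLp.ext h)
  have hw₀ : 0 < ‖w‖ := norm_pos_iff.mpr hw
  set u := ‖w‖⁻¹ • w
  set e := EuclideanSpace.single i₀ (1 : ℝ)
  have hu : ‖u‖ = ‖e‖ := by simp [u, e, norm_smul, hw₀.ne']
  set T := Submodule.reflection (ℝ ∙ (u - e))ᗮ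
  have hTu : T u = e := Submodule.reflection_sub hu
  set box : Set (ι → ℝ) :=
    univ.pi <|
      Function.update (fun _ => closedBall 0 R) i₀ (closedBall (c / ‖w‖) (r / ‖w‖))
  have hsub : {v : E | |inner ℝ v w - c| ≤ r} ∩ closedBall 0 R ⊆
      (fun v => WithLp.ofLp (T v)) ⁻¹' box := by
    rintro v ⟨hvw, hvR⟩ i -
    rcases eq_or_ne i i₀ with rfl | hi
    · have hTv : T v i = inner ℝ v w / ‖w‖ := by
        have he : inner ℝ (T v) e = T v i := by simp [e, EuclideanSpace.inner_single_right]
        rw [← he, ← hTu, T.inner_map_map, real_inner_smul_right]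
        field_simp
      simp only [Function.update_self, mem_closedBall, Real.dist_eq, hTv]
      rw [← sub_div, abs_div, abs_of_pos hw₀]
      gcongr
      exact hvw
    · simp only [Function.update_of_ne hi, mem_closedBall_zero_iff, Real.norm_eq_abs]
      calc |T v i| ≤ ‖T v‖ := by simpa using PiLp.norm_apply_le (T v) i
        _ ≤ R := by simpa using hvR
  calc _ ≤ volume ((fun v => WithLp.ofLp (T v)) ⁻¹' box) := measure_mono hsub
    _ = volume box := ((PiLp.volume_preserving_ofLp ι).comp T.measurePreserving).measure_preimage
        (MeasurableSet.univ_pi fun i => by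
          rcases eq_or_ne i i₀ with rfl | hi
          · simpa using measurableSet_closedBall
          · simpa [hi] using measurableSet_closedBall).nullMeasurableSet
    _ = _ := by
      rw [volume_pi_pi]
      have hside : ∀ i ∈ ({i₀}ᶜ : Finset ι),
          volume (Function.update (fun _ => closedBall (0 : ℝ) R) i₀
            (closedBall (c / ‖w‖) (r / ‖w‖)) i) = ENNReal.ofReal (2 * R) := fun i hi => by
        rw [Function.update_of_ne (by simpa using hi), Real.volume_closedBall]
      rw [Fintype.prod_eq_mul_prod_compl i₀, Finset.prod_congr rfl hside]
      simp [Finset.card_compl, Real.volume_closedBall]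

theorem volume_rowSolutions_inter_closedBall_le {x y₀ : E} {T : Set E}
    {f : E → EuclideanSpace ℝ (Fin k)} {K : ℝ≥0} (hf : LipschitzOnWith K f T)
    (hy₀ : y₀ ∈ T) (hT : ediam T ≠ ⊤) {ε : ℝ} (hε : 0 < ε)
    (hx : ε ≤ ‖x - y₀‖) {R : ℝ} (hR : 0 ≤ R) :
    volume (rowSolutions x f T ∩ closedBall 0 R) ≤
      (ENNReal.ofReal (2 * ((R + K) / ε)) * ENNReal.ofReal (2 * R) ^ (Fintype.card ι - 1)) ^ k *
        ediam T ^ k := by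
  set ρ := (ediam T).toReal
  have hw : 0 < ‖x - y₀‖ := hε.trans_le hx
  have hsub : rowSolutions x f T ∩ closedBall 0 R ⊆ univ.pi fun i =>
        {v | |inner ℝ v (x - y₀) - f y₀ i| ≤ (R + K) * ρ} ∩ closedBall 0 R := by
    rintro l ⟨⟨y, hy, hl⟩, hlR⟩ i -
    have hli : ‖l i‖ ≤ R := (norm_le_pi_norm l i).trans (mem_closedBall_zero_iff.mp hlR)
    have hyy₀ : ‖y - y₀‖ ≤ ρ := by
      rw [← dist_eq_norm, dist_edist]
      exact ENNReal.toReal_mono hT (edist_le_ediam_of_mem hy hy₀)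
    have hsplit :
        inner ℝ (l i) (x - y₀) - f y₀ i = inner ℝ (l i) (y - y₀) + (f y - f y₀) i := by
      rw [show x - y₀ = (x - y) + (y - y₀) by abel, inner_add_right, hl i, PiLp.sub_apply]
      ring
    refine ⟨?_, mem_closedBall_zero_iff.mpr hli⟩
    calc |inner ℝ (l i) (x - y₀) - f y₀ i|
        ≤ |inner ℝ (l i) (y - y₀)| + |(f y - f y₀) i| := hsplit ▸ abs_add_le _ _
      _ ≤ ‖l i‖ * ‖y - y₀‖ + ‖f y - f y₀‖ := by
        gcongr
        · exact abs_real_inner_le_norm _ _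
        · exact PiLp.norm_apply_le (f y - f y₀) i
      _ ≤ R * ρ + K * ρ := by
        gcongr
        calc ‖f y - f y₀‖ ≤ K * ‖y - y₀‖ := by
              simpa only [dist_eq_norm] using hf.dist_le_mul y hy y₀ hy₀
          _ ≤ K * ρ := by gcongr
      _ = (R + K) * ρ := by ring
  have hslab : ∀ i,
      volume ({v | |inner ℝ v (x - y₀) - f y₀ i| ≤ (R + K) * ρ} ∩ closedBall 0 R) ≤
      ENNReal.ofReal (2 * ((R + K) / ε)) * ENNReal.ofReal (2 * R) ^ (Fintype.card ι - 1) *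
        ENNReal.ofReal ρ := fun i => by
    refine (volume_abs_inner_sub_le_inter_closedBall_le (norm_pos_iff.mp hw) _ _ _).trans ?_
    rw [mul_right_comm, ← ENNReal.ofReal_mul (by positivity)]
    gcongr ENNReal.ofReal ?_ * _
    calc 2 * ((R + K) * ρ / ‖x - y₀‖) ≤ 2 * ((R + K) * ρ / ε) := by gcongr
      _ = 2 * ((R + K) / ε) * ρ := by ring
  calc _ ≤ volume (univ.pi fun i =>
        {v | |inner ℝ v (x - y₀) - f y₀ i| ≤ (R + K) * ρ} ∩ closedBall 0 R) :=
        measure_mono hsub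
    _ = ∏ i,
          volume ({v | |inner ℝ v (x - y₀) - f y₀ i| ≤ (R + K) * ρ} ∩ closedBall 0 R) :=
        volume_pi_pi _
    _ ≤ ∏ _i : Fin k, ENNReal.ofReal (2 * ((R + K) / ε)) *
          ENNReal.ofReal (2 * R) ^ (Fintype.card ι - 1) * ENNReal.ofReal ρ :=
        Finset.prod_le_prod' fun i _ => hslab i
    _ = _ := by rw [Finset.prod_const, Finset.card_univ, Fintype.card_fin, mul_pow,
        ENNReal.ofReal_toReal hT]

theorem volume_rowSolutions_inter_closedBall_eq_zero {x : E} {S : Set E} (hS : μH[k] S = 0)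
    {f : E → EuclideanSpace ℝ (Fin k)} {K : ℝ≥0} (hf : LipschitzOnWith K f S)
    {ε : ℝ} (hε : 0 < ε) (hSx : ∀ y ∈ S, ε ≤ ‖x - y‖) {R : ℝ} (hR : 0 ≤ R) :
    volume (rowSolutions x f S ∩ closedBall 0 R) = 0 := by
  set C := ENNReal.ofReal (2 * ((R + K) / ε)) * ENNReal.ofReal (2 * R) ^ (Fintype.card ι - 1)
  have hC : C ^ k ≠ ⊤ := by finiteness
  refine le_antisymm (le_of_forall_gt_imp_ge_of_dense fun η hη => ?_) zero_le
  obtain ⟨t, hcover, hdiam, hsum⟩ :=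
    exists_cover_tsum_ediam_rpow_lt_of_hausdorffMeasure_eq_zero hS (ENNReal.div_pos hη.ne' hC)
  have hpiece : ∀ n, volume (rowSolutions x f (t n ∩ S) ∩ closedBall 0 R) ≤
        C ^ k * ⨆ _ : (t n).Nonempty, ediam (t n) ^ (k : ℝ) := fun n => by
    rcases (t n ∩ S).eq_empty_or_nonempty with h | ⟨y₀, hy₀⟩
    · simp [h, rowSolutions]
    have hT : ediam (t n ∩ S) ≠ ⊤ :=
      ((ediam_mono inter_subset_left).trans (hdiam n)).trans_lt ENNReal.one_lt_top |>.ne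
    rw [iSup_pos ⟨y₀, hy₀.1⟩, ENNReal.rpow_natCast]
    refine (volume_rowSolutions_inter_closedBall_le (hf.mono inter_subset_right) hy₀ hT hε
      (hSx y₀ hy₀.2) hR).trans ?_
    gcongr
    exact inter_subset_left
  calc _ ≤ volume (⋃ n, rowSolutions x f (t n ∩ S) ∩ closedBall 0 R) := by
        refine measure_mono ?_
        rintro l ⟨⟨y, hy, hl⟩, hlR⟩
        obtain ⟨n, hn⟩ := mem_iUnion.mp (hcover hy)
        exact mem_iUnion.mpr ⟨n, ⟨y, ⟨hn, hy⟩, hl⟩, hlR⟩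
    _ ≤ ∑' n, volume (rowSolutions x f (t n ∩ S) ∩ closedBall 0 R) := measure_iUnion_le _
    _ ≤ ∑' n, C ^ k * ⨆ _ : (t n).Nonempty, ediam (t n) ^ (k : ℝ) :=
        ENNReal.tsum_le_tsum hpiece
    _ = C ^ k * ∑' n, ⨆ _ : (t n).Nonempty, ediam (t n) ^ (k : ℝ) := ENNReal.tsum_mul_left
    _ ≤ C ^ k * (η / C ^ k) := by gcongr
    _ ≤ η := ENNReal.mul_div_le

theorem volume_rowSolutions_eq_zero {x : E} {S : Set E} (hS : μH[k] S = 0)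
    {f : E → EuclideanSpace ℝ (Fin k)} {K : ℝ≥0} (hf : LipschitzOnWith K f S)
    (hx : x ∉ S) :
    volume (rowSolutions x f S) = 0 := by
  set S' : ℕ → Set E := fun n => {y ∈ S | 1 / (n + 1) ≤ ‖x - y‖}
  refine measure_mono_null
    (t := ⋃ (n : ℕ) (R : ℕ), rowSolutions x f (S' n) ∩ closedBall 0 R) ?_
    (measure_iUnion_null fun n => measure_iUnion_null fun R =>
      volume_rowSolutions_inter_closedBall_eq_zero (measure_mono_null (sep_subset _ _) hS)
        (hf.mono (sep_subset _ _)) Nat.one_div_pos_of_nat (fun y hy => hy.2) R.cast_nonneg)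
  rintro l ⟨y, hy, hl⟩
  have hxy : 0 < ‖x - y‖ := norm_pos_iff.mpr (sub_ne_zero.mpr (ne_of_mem_of_not_mem hy hx).symm)
  obtain ⟨n, hn⟩ := exists_nat_one_div_lt hxy
  obtain ⟨R, hR⟩ := exists_nat_ge ‖l‖
  exact mem_iUnion₂.mpr ⟨n, R, ⟨y, ⟨hy, hn.le⟩, hl⟩, mem_closedBall_zero_iff.mpr hR⟩

theorem volume_setOf_mem_collisionSet_add_inner_eq_zero {X : Set E} (hX : μH[k] X = 0)
    {φ : E → EuclideanSpace ℝ (Fin k)} {K : ℝ≥0} (hφ : LipschitzOnWith K φ X) (x : E) :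
    volume {l : Fin k → E |
      x ∈ collisionSet (fun y => φ y + WithLp.toLp 2 fun i => inner ℝ (l i) y) X} = 0 := by
  by_cases hx : x ∈ X
  · have hf : LipschitzOnWith K (fun y => φ y - φ x) (X \ {x}) :=
      LipschitzOnWith.of_dist_le_mul fun a ha b hb => by
        simpa only [dist_sub_right] using hφ.dist_le_mul a ha.1 b hb.1
    refine measure_mono_null ?_ (volume_rowSolutions_eq_zero
      (measure_mono_null sdiff_subset hX) hf fun h => h.2 rfl)
    rintro l ⟨-, y, hy, hyx, heq⟩
    refine ⟨y, ⟨hy, hyx⟩, fun i => ?_⟩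
    have heq_i := congrArg (· i) heq
    simp only [PiLp.add_apply] at heq_i
    rw [inner_sub_right, PiLp.sub_apply]
    linarith
  · simp [collisionSet, hx]

end Slices

theorem as_injective_with_continuous_inverse_general (N k : ℕ)
    (μ : Measure (EuclideanSpace ℝ (Fin N))) [IsFiniteMeasure μ]
    (X : Set (EuclideanSpace ℝ (Fin N))) (hX : IsCompact X) (hμX : μ Xᶜ = 0)
    (hH : μH[(k : ℝ)] X = 0)
    (φ : EuclideanSpace ℝ (Fin N) → EuclideanSpace ℝ (Fin k))
    (hφ : ∃ K : ℝ≥0, LipschitzOnWith K φ X) :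
    ∀ᵐ l ∂(volume : Measure (Fin k → EuclideanSpace ℝ (Fin N))),
      ∃ X_L, X_L ⊆ X ∧ MeasurableSet X_L ∧ μ X_Lᶜ = 0 ∧
        Set.InjOn
          (fun x => φ x + show EuclideanSpace ℝ (Fin k) from WithLp.toLp 2 fun i => (inner ℝ (l i) x : ℝ)) X_L ∧
        ∀ x ∈ X_L, ∀ ε > (0 : ℝ), ∃ δ > (0 : ℝ), ∀ y ∈ X,
          ‖(φ x + show EuclideanSpace ℝ (Fin k) from WithLp.toLp 2 fun i => (inner ℝ (l i) x : ℝ)) -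
            (φ y + show EuclideanSpace ℝ (Fin k) from WithLp.toLp 2 fun i => (inner ℝ (l i) y : ℝ))‖ ≤ δ →
            ‖x - y‖ ≤ ε := by
  obtain ⟨K, hK⟩ := hφ
  set F : (Fin k → EuclideanSpace ℝ (Fin N)) → EuclideanSpace ℝ (Fin N) →
      EuclideanSpace ℝ (Fin k) := fun l x => φ x + WithLp.toLp 2 fun i => inner ℝ (l i) x
  have hF : ContinuousOn (Function.uncurry F) (univ ×ˢ X) :=
    (hK.continuousOn.comp continuousOn_snd fun q hq => hq.2).add
      (by fun_prop : Continuous _).continuousOn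
  have hJ := hX.measurableSet_setOf_mem_collisionSet hF
  filter_upwards [ae_measure_prodMk_preimage_eq_zero (ν := μ) hJ
    (volume_setOf_mem_collisionSet_add_inner_eq_zero hH hK)] with l hl
  refine ⟨X \ collisionSet (F l) X, sdiff_subset,
    hX.measurableSet.diff (measurable_prodMk_left hJ), ?_, injOn_diff_collisionSet _ _,
    fun x hx ε hε => ?_⟩
  · rw [compl_sdiff]
    exact measure_union_null hl hμX
  · have hFl : ContinuousOn (F l) X :=
      hF.comp (continuousOn_const.prodMk continuousOn_id) fun y hy => ⟨mem_univ _, hy⟩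
    simpa only [dist_eq_norm] using hX.exists_forall_dist_le_of_mem_diff_collisionSet hFl hx hε

/-- Theorem: continuity of the inverse of almost-surely injective linear
perturbations of Lipschitz maps.  If `μ` is a finite Borel measure with compact support
`X ⊆ ℝ^N` with `H^k(X) = 0` and `φ : X → ℝ^k` is Lipschitz, then for Lebesgue-almost every
linear map `L : ℝ^N → ℝ^k` (parametrized by the `k` vectors `l i` defining it via
`L x = (⟪l 1, x⟫, …, ⟪l k, x⟫)`) there is a full-measure Borel set `X_L ⊆ X` on which
`φ_L = φ + L` is injective, and whose inverse is continuous in the stated `ε`-`δ` sense. -/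
theorem as_injective_with_continuous_inverse (N k : ℕ) (hk : 1 ≤ k) (hkN : k ≤ N)
    (μ : Measure (EuclideanSpace ℝ (Fin N))) [IsFiniteMeasure μ]
    (X : Set (EuclideanSpace ℝ (Fin N))) (hX : IsCompact X) (hμX : μ Xᶜ = 0)
    (hH : μH[(k : ℝ)] X = 0)
    (φ : EuclideanSpace ℝ (Fin N) → EuclideanSpace ℝ (Fin k))
    (hφ : ∃ K : ℝ≥0, LipschitzOnWith K φ X) :
    ∀ᵐ l ∂(volume : Measure (Fin k → EuclideanSpace ℝ (Fin N))),
      ∃ X_L, X_L ⊆ X ∧ MeasurableSet X_L ∧ μ X_Lᶜ = 0 ∧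
        Set.InjOn
          (fun x => φ x + show EuclideanSpace ℝ (Fin k) from WithLp.toLp 2 fun i => (inner ℝ (l i) x : ℝ)) X_L ∧
        ∀ x ∈ X_L, ∀ ε > (0 : ℝ), ∃ δ > (0 : ℝ), ∀ y ∈ X,
          ‖(φ x + show EuclideanSpace ℝ (Fin k) from WithLp.toLp 2 fun i => (inner ℝ (l i) x : ℝ)) -
            (φ y + show EuclideanSpace ℝ (Fin k) from WithLp.toLp 2 fun i => (inner ℝ (l i) y : ℝ))‖ ≤ δ →
            ‖x - y‖ ≤ ε :=
  as_injective_with_continuous_inverse_general N k μ X hX hμX hH φ hφ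
end

section
/- There exists a compactly supported Borel probability measure $\mu$ on $\mathbb{R}^2$ with $\dim_H\mu>0$ such that for every line $V\subset\mathbb{R}^2$ through the origin, the orthogonal projection $P_V:\mathbb{R}^2\to V$ is injective on some Borel set of full $\mu$-measure. -/
/-!
Let `x = ∑ εₖ 4^-(k+1)` have independent digits `εₖ ∈ {0, 1}` with `P(εₖ = 1) = 1/4`, and let
`μ` be the law of `(x, x²)`. Parabola points with parameters `s ≠ t` have the same projection
onto the line spanned by `v` only if `s + t = -v₀ / v₁`, so it suffices to find, for each `m`, a
full-measure set on which `x + y = m` forces `x = y`.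

Digits `0` and `1` add without carries, so `x + y = m` fixes `εₖ(x) + εₖ(y)` for every `k`. On the
set `T` of positions where this sum is `1`, the digits of `y` are those of `x` flipped; off `T`
both are prescribed. If `T` is infinite, the strong law of large numbers along `T` gives a
full-measure set on which the frequency of ones along `T` is `1/4`, which `x` and its flip (of
frequency `3/4`) cannot both satisfy. If `T` is finite, the digits off `T` are prescribed, an
event of probability zero.

The `n`-th cylinders have mass at most `(3/4)^n` and are `4^-n / 3`-separated, so by the mass
distribution principle `dim_H μ ≥ log (4/3) / log 4`.
-/

open MeasureTheory Metric Set
open scoped NNReal ENNReal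

/-- The (upper) Hausdorff dimension of a measure: the infimum of the Hausdorff dimensions
of Borel sets of full measure. -/
noncomputable def dimHMeasure {N : ℕ} (μ : Measure (EuclideanSpace ℝ (Fin N))) : ℝ≥0∞ :=
  ⨅ (X : Set (EuclideanSpace ℝ (Fin N))) (_ : MeasurableSet X) (_ : μ Xᶜ = 0), dimH X

open Filter Topology ProbabilityTheory

namespace Real

variable {b : ℕ}

theorem ofDigits_add_ofDigits {x y z : ℕ → Fin b} (h : ∀ i, (x i : ℕ) + y i = z i) :
    ofDigits x + ofDigits y = ofDigits z := by
  rw [ofDigits, ofDigits, ofDigits, ← Summable.tsum_add summable_ofDigitsTerm summable_ofDigitsTerm]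
  congr 1 with i
  simp only [ofDigitsTerm, ← h i]
  push_cast
  ring

theorem ofDigits_le_of_forall_le {x : ℕ → Fin b} {d : ℕ} (hb : 1 < b) (h : ∀ i, (x i : ℕ) ≤ d) :
    ofDigits x ≤ d / (b - 1) := by
  have hb' : (0 : ℝ) < b - 1 := by
    rw [sub_pos]
    exact_mod_cast hb
  set last : ℕ → Fin b := fun _ ↦ ⟨b - 1, Nat.sub_one_lt_of_lt hb⟩
  calc ofDigits x ≤ ∑' i, d / (b - 1) * ofDigitsTerm last i := by
        refine Summable.tsum_le_tsum (fun i ↦ ?_) summable_ofDigitsTerm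
          (summable_ofDigitsTerm.mul_left _)
        have hlast : ((last i : ℕ) : ℝ) = b - 1 := by
          simp [last, Nat.cast_sub hb.le]
        rw [ofDigitsTerm, ofDigitsTerm, hlast, ← mul_assoc, div_mul_cancel₀ _ hb'.ne']
        gcongr
        exact_mod_cast h i
    _ = d / (b - 1) := by
        rw [tsum_mul_left, ← ofDigits, ofDigits_const_last_eq_one' hb, mul_one]

theorem inv_le_abs_ofDigits_sub_of_apply_zero_ne {x y : ℕ → Fin b} (hx : ∀ i, (x i : ℕ) + 2 ≤ b)
    (hy : ∀ i, (y i : ℕ) + 2 ≤ b) (h₀ : x 0 ≠ y 0) :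
    ((b : ℝ) * (b - 1))⁻¹ ≤ |ofDigits x - ofDigits y| := by
  wlog hlt : x 0 < y 0 generalizing x y
  · rw [abs_sub_comm]
    exact this hy hx h₀.symm (lt_of_le_of_ne (not_lt.1 hlt) h₀.symm)
  have hb : 1 < b := by have := hx 0; omega
  have hb' : (0 : ℝ) < b - 1 := by
    rw [sub_pos]
    exact_mod_cast hb
  have head (z : ℕ → Fin b) :
      ofDigits z = (b : ℝ)⁻¹ * (z 0 + ofDigits fun i ↦ z (i + 1)) := by
    rw [ofDigits_eq_sum_add_ofDigits z 1, Finset.sum_range_one, ofDigitsTerm]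
    ring
  have htail : (ofDigits fun i ↦ x (i + 1)) ≤ 1 - (b - 1 : ℝ)⁻¹ := by
    calc (ofDigits fun i ↦ x (i + 1)) ≤ ((b - 2 : ℕ) : ℝ) / (b - 1) :=
          ofDigits_le_of_forall_le hb fun i ↦ by have := hx (i + 1); omega
      _ = 1 - (b - 1 : ℝ)⁻¹ := by
          rw [Nat.cast_sub (by omega)]
          field_simp
          ring
  have hdigit : (x 0 : ℝ) + 1 ≤ y 0 := by exact_mod_cast hlt
  rw [abs_sub_comm, head x, head y, ← mul_sub, mul_inv]
  refine le_trans ?_ (le_abs_self _)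
  gcongr
  nlinarith [ofDigits_nonneg fun i ↦ y (i + 1)]

theorem eq_of_abs_ofDigits_sub_lt {x y : ℕ → Fin b} (hx : ∀ i, (x i : ℕ) + 2 ≤ b)
    (hy : ∀ i, (y i : ℕ) + 2 ≤ b) {n : ℕ}
    (h : |ofDigits x - ofDigits y| < ((b : ℝ) ^ n * (b - 1))⁻¹) {i : ℕ} (hi : i < n) :
    x i = y i := by
  induction i using Nat.strong_induction_on with
  | _ i ih =>
  by_contra hne
  have hb : (1 : ℝ) < b := by have := hx 0; exact_mod_cast (by omega : 1 < b)
  have hsep := inv_le_abs_ofDigits_sub_of_apply_zero_ne (x := fun j ↦ x (j + i))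
    (y := fun j ↦ y (j + i)) (fun j ↦ hx _) (fun j ↦ hy _) (by simpa using hne)
  have hhead : ∑ j ∈ Finset.range i, ofDigitsTerm x j = ∑ j ∈ Finset.range i, ofDigitsTerm y j :=
    Finset.sum_congr rfl fun j hj ↦ by
      have hji := Finset.mem_range.1 hj
      rw [ofDigitsTerm, ofDigitsTerm, ih j hji (hji.trans hi)]
  rw [ofDigits_eq_sum_add_ofDigits x i, ofDigits_eq_sum_add_ofDigits y i, hhead,
    add_sub_add_left_eq_sub, ← mul_sub, abs_mul, abs_of_pos (by positivity)] at h
  have : ((b : ℝ) ^ n * (b - 1))⁻¹ ≤ ((b : ℝ) ^ i)⁻¹ * ((b : ℝ) * (b - 1))⁻¹ := by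
    rw [← mul_inv, ← mul_assoc, ← pow_succ]
    gcongr
    exacts [hb.le, hi]
  nlinarith [inv_pos.2 (pow_pos (by linarith : (0 : ℝ) < b) i)]

theorem eq_of_ofDigits_eq {x y : ℕ → Fin b} (hx : ∀ i, (x i : ℕ) + 2 ≤ b)
    (hy : ∀ i, (y i : ℕ) + 2 ≤ b) (h : ofDigits x = ofDigits y) : x = y := by
  have hb : (1 : ℝ) < b := by have := hx 0; exact_mod_cast (by omega : 1 < b)
  funext i
  refine eq_of_abs_ofDigits_sub_lt hx hy (n := i + 1) ?_ (Nat.lt_succ_self i)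
  rw [h, sub_self, abs_zero]
  have : (0 : ℝ) < b - 1 := by linarith
  positivity

end Real

noncomputable section

def bitDigit (c : Bool) : Fin 4 := ⟨c.toNat, (Bool.toNat_le c).trans_lt (by norm_num)⟩

theorem bitDigit_injective : Function.Injective bitDigit := by decide

theorem bitDigit_add_two_le (c : Bool) : (bitDigit c : ℕ) + 2 ≤ 4 := by cases c <;> decide

def cantorCode (ω : ℕ → Bool) : ℝ := Real.ofDigits (bitDigit ∘ ω)

theorem continuous_cantorCode : Continuous cantorCode :=
  Real.continuous_ofDigits.comp <| continuous_pi fun k ↦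
    continuous_of_discreteTopology.comp (continuous_apply k)

theorem cantorCode_injective : Function.Injective cantorCode := fun ω ω' h ↦
  (bitDigit_injective.comp_left).eq_iff.1 <| Real.eq_of_ofDigits_eq
    (fun i ↦ bitDigit_add_two_le (ω i)) (fun i ↦ bitDigit_add_two_le (ω' i)) h

theorem toNat_add_toNat_eq_of_cantorCode_add_eq {ω ω' η η' : ℕ → Bool}
    (h : cantorCode ω + cantorCode ω' = cantorCode η + cantorCode η') (k : ℕ) :
    (ω k).toNat + (ω' k).toNat = (η k).toNat + (η' k).toNat := by
  let digitSum (ω ω' : ℕ → Bool) (i : ℕ) : Fin 4 :=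
    ⟨(ω i).toNat + (ω' i).toNat, by
      have := Bool.toNat_le (ω i); have := Bool.toNat_le (ω' i); omega⟩
  have hsum (ω ω' : ℕ → Bool) : cantorCode ω + cantorCode ω' = Real.ofDigits (digitSum ω ω') :=
    Real.ofDigits_add_ofDigits fun _ ↦ rfl
  have hle (ω ω' : ℕ → Bool) (i : ℕ) : (digitSum ω ω' i : ℕ) + 2 ≤ 4 := by
    have := Bool.toNat_le (ω i); have := Bool.toNat_le (ω' i)
    simp only [digitSum]
    omega
  rw [hsum, hsum] at h
  exact congrArg Fin.val (congrFun (Real.eq_of_ofDigits_eq (hle ω ω') (hle η η') h) k)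

theorem eq_of_dist_cantorCode_lt {ω ω' : ℕ → Bool} {n : ℕ}
    (h : dist (cantorCode ω) (cantorCode ω') < ((4 : ℝ) ^ n * 3)⁻¹) {i : ℕ} (hi : i < n) :
    ω i = ω' i :=
  bitDigit_injective <| Real.eq_of_abs_ofDigits_sub_lt (x := bitDigit ∘ ω) (y := bitDigit ∘ ω')
    (fun i ↦ bitDigit_add_two_le (ω i)) (fun i ↦ bitDigit_add_two_le (ω' i))
    (by rw [← Real.dist_eq]; convert h using 2 <;> norm_num [cantorCode]) hi

def quarterCoin : Measure Bool := Ber(true, false, ⟨4⁻¹, by norm_num, by norm_num⟩)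

instance : IsProbabilityMeasure quarterCoin := by
  unfold quarterCoin
  infer_instance

def coinFlips : Measure (ℕ → Bool) := Measure.infinitePi fun _ ↦ quarterCoin

instance : IsProbabilityMeasure coinFlips := by
  unfold coinFlips
  infer_instance

theorem coinFlips_eqOn_le (ω₀ : ℕ → Bool) (F : Finset ℕ) :
    coinFlips {ω | EqOn ω ω₀ F} ≤ ENNReal.ofReal (3 / 4) ^ F.card := by
  have hpi : {ω : ℕ → Bool | EqOn ω ω₀ F} = (F : Set ℕ).pi fun k ↦ {ω₀ k} := by
    ext ω
    simp [EqOn]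
  rw [hpi, coinFlips, quarterCoin, Measure.infinitePi_pi _ fun _ _ ↦ measurableSet_singleton _]
  refine Finset.prod_le_pow_card _ _ _ fun k _ ↦ ?_
  cases ω₀ k <;>
    simp only [measurableSet_singleton, bernoulliMeasure_apply_of_mem_of_notMem,
      bernoulliMeasure_apply_of_notMem_of_mem, Set.mem_singleton_iff, reduceCtorEq,
      not_false_eq_true] <;>
    rw [← ENNReal.ofReal_coe_nnreal, unitInterval.coe_toNNReal] <;>
    exact ENNReal.ofReal_le_ofReal (by norm_num)

theorem coinFlips_eqOn_eq_zero (ω₀ : ℕ → Bool) {S : Set ℕ} (hS : S.Infinite) :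
    coinFlips {ω | EqOn ω ω₀ S} = 0 := by
  have hlim := ENNReal.tendsto_pow_atTop_nhds_zero_of_lt_one
    (r := ENNReal.ofReal (3 / 4)) (ENNReal.ofReal_lt_one.2 (by norm_num))
  refine le_antisymm (ge_of_tendsto' hlim fun n ↦ ?_) zero_le
  obtain ⟨F, hFS, rfl⟩ := hS.exists_subset_card_eq n
  exact (measure_mono fun ω hω ↦ hω.mono hFS).trans (coinFlips_eqOn_le ω₀ F)

theorem ae_tendsto_average_comp_infinitePi {α : Type*} [MeasurableSpace α] (ν : Measure α)
    [IsProbabilityMeasure ν] {f : α → ℝ} (hf : Measurable f) (hfi : Integrable f ν)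
    {σ : ℕ → ℕ} (hσ : Function.Injective σ) :
    ∀ᵐ ω ∂Measure.infinitePi (fun _ : ℕ ↦ ν),
      Tendsto (fun n : ℕ ↦ (∑ i ∈ Finset.range n, f (ω (σ i))) / n) atTop (𝓝 (∫ x, f x ∂ν)) := by
  set P := Measure.infinitePi fun _ : ℕ ↦ ν
  have heval (j : ℕ) : P.map (fun ω ↦ ω j) = ν := Measure.infinitePi_map_eval _ j
  have hindep : iIndepFun (fun i (ω : ℕ → α) ↦ f (ω (σ i))) P :=
    (iIndepFun_infinitePi (X := fun _ ↦ f) fun _ ↦ hf).precomp hσ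
  have hlaw (j : ℕ) : P.map (fun ω ↦ f (ω j)) = ν.map f := by
    rw [← heval j, Measure.map_map hf (measurable_pi_apply j), Function.comp_def]
  have hident (i : ℕ) : IdentDistrib (fun ω : ℕ → α ↦ f (ω (σ i))) (fun ω ↦ f (ω (σ 0))) P P :=
    ⟨(hf.comp (measurable_pi_apply _)).aemeasurable,
      (hf.comp (measurable_pi_apply _)).aemeasurable, (hlaw _).trans (hlaw _).symm⟩
  have hint : Integrable (fun ω : ℕ → α ↦ f (ω (σ 0))) P :=
    (heval (σ 0) ▸ hfi).comp_measurable (measurable_pi_apply _)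
  have hmean : ∫ ω, f (ω (σ 0)) ∂P = ∫ x, f x ∂ν := by
    rw [← integral_map (measurable_pi_apply _).aemeasurable hf.aestronglyMeasurable, heval]
  simpa only [hmean] using strong_law_ae_real _ hint (fun i j hij ↦ hindep.indepFun hij) hident

def freqAlong (σ : ℕ → ℕ) (ω : ℕ → Bool) (n : ℕ) : ℝ :=
  (∑ i ∈ Finset.range n, ((ω (σ i)).toNat : ℝ)) / n

theorem ae_tendsto_freqAlong {σ : ℕ → ℕ} (hσ : Function.Injective σ) :
    ∀ᵐ ω ∂coinFlips, Tendsto (freqAlong σ ω) atTop (𝓝 4⁻¹) := by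
  have hmean : ∫ c, (c.toNat : ℝ) ∂quarterCoin = 4⁻¹ := by
    simp [quarterCoin, integral_bernoulliMeasure]
  have := ae_tendsto_average_comp_infinitePi quarterCoin (f := fun c : Bool ↦ (c.toNat : ℝ))
    (measurable_of_countable _) (integrable_bernoulliMeasure _ _ _ _) hσ
  rwa [hmean] at this

theorem tendsto_freqAlong_of_eq_not {σ : ℕ → ℕ} {ω ω' : ℕ → Bool}
    (h : ∀ i, ω' (σ i) = !ω (σ i)) {p : ℝ} (hp : Tendsto (freqAlong σ ω) atTop (𝓝 p)) :
    Tendsto (freqAlong σ ω') atTop (𝓝 (1 - p)) := by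
  have hnot (c : Bool) : ((!c).toNat : ℝ) = 1 - c.toNat := by cases c <;> simp
  refine (tendsto_const_nhds.sub hp).congr' ?_
  filter_upwards [eventually_ne_atTop 0] with n hn
  simp only [freqAlong, h, hnot, Finset.sum_sub_distrib, Finset.sum_const, Finset.card_range,
    nsmul_eq_mul, mul_one, sub_div, div_self (Nat.cast_ne_zero.2 hn : (n : ℝ) ≠ 0)]

theorem exists_mem_ae_coinFlips_eq_of_cantorCode_add_eq (m : ℝ) :
    ∃ Z ∈ ae coinFlips, ∀ ω ∈ Z, ∀ ω' ∈ Z, cantorCode ω + cantorCode ω' = m → ω = ω' := by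
  by_cases hm : ∃ ω₀ ω₀', cantorCode ω₀ + cantorCode ω₀' = m
  swap
  · exact ⟨univ, univ_mem, fun ω _ ω' _ h ↦ (hm ⟨ω, ω', h⟩).elim⟩
  obtain ⟨ω₀, ω₀', rfl⟩ := hm
  set T := {k | ω₀ k ≠ ω₀' k}
  have hdigit (ω ω' : ℕ → Bool)
      (h : cantorCode ω + cantorCode ω' = cantorCode ω₀ + cantorCode ω₀') (k : ℕ) :
      (k ∈ T → ω' k = !ω k) ∧ (k ∉ T → ω k = ω₀ k) := by
    have key : ∀ a b c d : Bool, a.toNat + b.toNat = c.toNat + d.toNat →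
        (c ≠ d → b = !a) ∧ (¬c ≠ d → a = c) := by decide
    exact key _ _ _ _ (toNat_add_toNat_eq_of_cantorCode_add_eq h k)
  rcases T.finite_or_infinite with hT | hT
  · refine ⟨{ω | ∃ k ∉ T, ω k ≠ ω₀ k}, ?_,
      fun ω ⟨k, hk, hne⟩ ω' _ h ↦ (hne ((hdigit ω ω' h k).2 hk)).elim⟩
    rw [mem_ae_iff]
    convert coinFlips_eqOn_eq_zero ω₀ hT.infinite_compl using 2
    ext ω
    simp [EqOn]
  · refine ⟨_, ae_tendsto_freqAlong (Nat.nth_injective hT), fun ω hω ω' hω' h ↦ ?_⟩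
    have hω'' := tendsto_freqAlong_of_eq_not
      (fun i ↦ (hdigit ω ω' h _).1 (Nat.nth_mem_of_infinite hT i)) hω
    have := tendsto_nhds_unique hω' hω''
    norm_num at this

def parabola (t : ℝ) : EuclideanSpace ℝ (Fin 2) := !₂[t, t ^ 2]

theorem continuous_parabola : Continuous parabola :=
  (PiLp.continuous_toLp 2 _).comp <| continuous_pi fun i ↦ by fin_cases i <;> simp <;> fun_prop

theorem antilipschitzWith_parabola : AntilipschitzWith 1 parabola :=
  AntilipschitzWith.of_le_mul_dist fun s t ↦ by
    simpa [parabola, Real.dist_eq, dist_eq_norm] using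
      PiLp.norm_apply_le (parabola s - parabola t) 0

theorem inner_parabola_sub_parabola (v : EuclideanSpace ℝ (Fin 2)) (s t : ℝ) :
    inner ℝ v (parabola s - parabola t) = (s - t) * (v 0 + v 1 * (s + t)) := by
  simp [parabola, PiLp.inner_apply, Fin.sum_univ_two]
  ring

theorem exists_add_eq_of_orthogonalProjection_parabola_eq
    {V : Submodule ℝ (EuclideanSpace ℝ (Fin 2))} (hV : V ≠ ⊥) :
    ∃ m : ℝ, ∀ s t,
      V.orthogonalProjectionOnto (parabola s) = V.orthogonalProjectionOnto (parabola t) →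
        s = t ∨ s + t = m := by
  obtain ⟨v, hvV, hv⟩ := Submodule.exists_mem_ne_zero_of_ne_bot hV
  refine ⟨-v 0 / v 1, fun s t hst ↦ ?_⟩
  have horth : parabola s - parabola t ∈ Vᗮ := by
    rw [← Submodule.orthogonalProjectionOnto_eq_zero_iff, map_sub, hst, sub_self]
  have hinner := Submodule.inner_right_of_mem_orthogonal hvV horth
  rw [inner_parabola_sub_parabola, mul_eq_zero, sub_eq_zero] at hinner
  refine hinner.imp_right fun hline ↦ ?_
  have hv₁ : v 1 ≠ 0 := by
    intro hv₁
    refine hv (by ext i; fin_cases i <;> simp_all)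
  field_simp
  linarith

section MassDistribution

variable {X : Type*} [EMetricSpace X] [MeasurableSpace X] {μ : Measure X} {r : ℝ} {d : ℝ≥0}

theorem ofReal_rpow_mul_measure_le_ediam_rpow (hr₀ : 0 < r) (hr₁ : r < 1) (hd : 0 < d)
    (hμ : ∀ (n : ℕ) (s : Set X), ediam s ≤ ENNReal.ofReal (r ^ (n + 1)) →
      μ s ≤ ENNReal.ofReal (r ^ (d : ℝ)) ^ n)
    {s : Set X} (hs : ediam s ≤ ENNReal.ofReal r) :
    ENNReal.ofReal ((r ^ 2) ^ (d : ℝ)) * μ s ≤ ediam s ^ (d : ℝ) := by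
  rcases eq_or_ne (ediam s) 0 with h₀ | h₀
  · have hlim := ENNReal.tendsto_pow_atTop_nhds_zero_of_lt_one (r := ENNReal.ofReal (r ^ (d : ℝ)))
      (ENNReal.ofReal_lt_one.2 (Real.rpow_lt_one hr₀.le hr₁ hd))
    have hs₀ : μ s = 0 :=
      le_antisymm (ge_of_tendsto' hlim fun n ↦ hμ n s (h₀ ▸ zero_le)) zero_le
    simp [hs₀]
  have hfin : ediam s ≠ ⊤ := ne_top_of_le_ne_top ENNReal.ofReal_ne_top hs
  set δ := (ediam s).toReal
  have hδ : 0 < δ := ENNReal.toReal_pos h₀ hfin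
  have hdiam : ediam s = ENNReal.ofReal δ := (ENNReal.ofReal_toReal hfin).symm
  obtain ⟨n, hn₁, hn₂⟩ := exists_nat_pow_near_of_lt_one (div_pos hδ hr₀)
    ((div_le_one hr₀).2 (ENNReal.toReal_le_of_le_ofReal hr₀.le hs)) hr₀ hr₁
  rw [lt_div_iff₀ hr₀, ← pow_succ] at hn₁
  rw [div_le_iff₀ hr₀, ← pow_succ] at hn₂
  calc ENNReal.ofReal ((r ^ 2) ^ (d : ℝ)) * μ s
      ≤ ENNReal.ofReal ((r ^ 2) ^ (d : ℝ)) * ENNReal.ofReal (r ^ (d : ℝ)) ^ n := by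
        gcongr
        exact hμ n s (hdiam ▸ ENNReal.ofReal_le_ofReal hn₂)
    _ = ENNReal.ofReal ((r ^ (n + 1 + 1)) ^ (d : ℝ)) := by
        rw [← ENNReal.ofReal_pow (by positivity), ← ENNReal.ofReal_mul (by positivity),
          Real.rpow_pow_comm hr₀.le, ← Real.mul_rpow (by positivity) (by positivity), ← pow_add]
        ring_nf
    _ ≤ ediam s ^ (d : ℝ) := by
        rw [hdiam, ENNReal.ofReal_rpow_of_nonneg hδ.le d.coe_nonneg]
        exact ENNReal.ofReal_le_ofReal (Real.rpow_le_rpow (by positivity) hn₁.le d.coe_nonneg)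

theorem le_dimH_of_measure_le_of_ediam_le [BorelSpace X] (hr₀ : 0 < r) (hr₁ : r < 1) (hd : 0 < d)
    (hμ : ∀ (n : ℕ) (s : Set X), ediam s ≤ ENNReal.ofReal (r ^ (n + 1)) →
      μ s ≤ ENNReal.ofReal (r ^ (d : ℝ)) ^ n)
    {A : Set X} (hA : μ A ≠ 0) : (d : ℝ≥0∞) ≤ dimH A := by
  set c := ENNReal.ofReal ((r ^ 2) ^ (d : ℝ))
  have hle : c • μ ≤ μH[d] :=
    Measure.le_hausdorffMeasure _ _ (ENNReal.ofReal r) (by simpa using hr₀) fun s hs ↦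
      ofReal_rpow_mul_measure_le_ediam_rpow hr₀ hr₁ hd hμ hs
  refine le_dimH_of_hausdorffMeasure_ne_zero fun h ↦ ?_
  have hA' := Measure.le_iff'.1 hle A
  rw [h, Measure.smul_apply, smul_eq_mul, nonpos_iff_eq_zero, mul_eq_zero] at hA'
  exact hA'.elim (ENNReal.ofReal_pos.2 (by positivity)).ne' hA

end MassDistribution

theorem isClosedEmbedding_parabola_comp_cantorCode :
    IsClosedEmbedding (parabola ∘ cantorCode) :=
  (continuous_parabola.comp continuous_cantorCode).isClosedEmbedding
    (antilipschitzWith_parabola.injective.comp cantorCode_injective)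

theorem map_coinFlips_le_of_ediam_le (n : ℕ) {s : Set (EuclideanSpace ℝ (Fin 2))}
    (hs : ediam s ≤ ENNReal.ofReal (4⁻¹ ^ (n + 1))) :
    coinFlips.map (parabola ∘ cantorCode) s ≤ ENNReal.ofReal (3 / 4) ^ n := by
  rw [isClosedEmbedding_parabola_comp_cantorCode.measurableEmbedding.map_apply]
  rcases (parabola ∘ cantorCode ⁻¹' s).eq_empty_or_nonempty with h | ⟨ω₀, hω₀⟩
  · simp [h]
  refine le_trans (measure_mono (t := {ω | EqOn ω ω₀ (Finset.range n)}) fun ω hω k hk ↦ ?_)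
    ((coinFlips_eqOn_le ω₀ (Finset.range n)).trans_eq (by rw [Finset.card_range]))
  refine eq_of_dist_cantorCode_lt ?_ (Finset.mem_range.1 hk)
  calc dist (cantorCode ω) (cantorCode ω₀)
      ≤ dist (parabola (cantorCode ω)) (parabola (cantorCode ω₀)) := by
        simpa using antilipschitzWith_parabola.le_mul_dist (cantorCode ω) (cantorCode ω₀)
    _ ≤ 4⁻¹ ^ (n + 1) := (edist_le_ofReal (by positivity)).1 <|
        (edist_le_ediam_of_mem (show parabola (cantorCode ω) ∈ s from hω) hω₀).trans hs
    _ < ((4 : ℝ) ^ n * 3)⁻¹ := by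
        rw [inv_pow, pow_succ]
        exact inv_strictAnti₀ (by positivity) (by gcongr; norm_num)

theorem dimHMeasure_map_coinFlips_pos :
    0 < dimHMeasure (coinFlips.map (parabola ∘ cantorCode)) := by
  set μ := coinFlips.map (parabola ∘ cantorCode)
  have : IsProbabilityMeasure μ := Measure.isProbabilityMeasure_map
    isClosedEmbedding_parabola_comp_cantorCode.continuous.aemeasurable
  have hlogb : 0 < Real.logb 4⁻¹ (3 / 4) :=
    Real.logb_pos_of_base_lt_one (by norm_num) (by norm_num) (by norm_num) (by norm_num)
  refine (ENNReal.coe_pos.2 (Real.toNNReal_pos.2 hlogb)).trans_le <|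
    le_iInf₂ fun X hXm ↦ le_iInf fun hX ↦ le_dimH_of_measure_le_of_ediam_le (μ := μ)
      (r := 4⁻¹) (by norm_num) (by norm_num) (Real.toNNReal_pos.2 hlogb) (fun n s hs ↦ ?_) ?_
  · rw [Real.coe_toNNReal _ hlogb.le, Real.rpow_logb (by norm_num) (by norm_num) (by norm_num)]
    exact map_coinFlips_le_of_ediam_le n hs
  · simp [(prob_compl_eq_zero_iff hXm).1 hX]

end

/-- Theorem 1.4: there exists a compactly supported Borel probability
measure `μ` on `ℝ²` of positive Hausdorff dimension such that for every line `V ⊆ ℝ²`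
through the origin, the orthogonal projection `P_V` is injective on some Borel set of
full `μ`-measure. -/
theorem exists_measure_all_projections_as_injective :
    ∃ μ : Measure (EuclideanSpace ℝ (Fin 2)), IsProbabilityMeasure μ ∧
      (∃ K : Set (EuclideanSpace ℝ (Fin 2)), IsCompact K ∧ μ Kᶜ = 0) ∧
      0 < dimHMeasure μ ∧
      ∀ V : Submodule ℝ (EuclideanSpace ℝ (Fin 2)), Module.finrank ℝ V = 1 →
        ∃ Y : Set (EuclideanSpace ℝ (Fin 2)), MeasurableSet Y ∧ μ Yᶜ = 0 ∧
          Set.InjOn (fun x => (Submodule.orthogonalProjectionOnto V x : V)) Y := by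
  have hΦ := isClosedEmbedding_parabola_comp_cantorCode
  refine ⟨_, Measure.isProbabilityMeasure_map hΦ.continuous.aemeasurable,
    ⟨range (parabola ∘ cantorCode), isCompact_range hΦ.continuous, ?_⟩,
    dimHMeasure_map_coinFlips_pos, fun V hV ↦ ?_⟩
  · rw [hΦ.measurableEmbedding.map_apply, preimage_compl, preimage_range, compl_univ,
      measure_empty]
  obtain ⟨m, hm⟩ := exists_add_eq_of_orthogonalProjection_parabola_eq (V := V)
    (by rintro rfl; simp at hV)
  obtain ⟨Z, hZ, hZinj⟩ := exists_mem_ae_coinFlips_eq_of_cantorCode_add_eq m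
  obtain ⟨Z', hZ', hZ'm, hZ'Z⟩ := Filter.Eventually.exists_measurable_mem hZ
  refine ⟨_ '' Z', hΦ.measurableEmbedding.measurableSet_image.2 hZ'm, ?_, ?_⟩
  · rwa [hΦ.measurableEmbedding.map_apply, preimage_compl, hΦ.injective.preimage_image,
      ← mem_ae_iff]
  rintro _ ⟨ω, hω, rfl⟩ _ ⟨ω', hω', rfl⟩ h
  rcases hm _ _ h with h | h
  · exact congrArg parabola h
  · rw [hZinj ω (hZ'Z ω hω) ω' (hZ'Z ω' hω') h]
end

section
/- Let $\{\varphi_i:i\in I\}$ be a finite family of contractions of $\mathbb{R}^N$ with $\varphi_{i_2}=\varphi_{i_1}+t$ for some distinct $i_1,i_2\in I$ and a nonzero vector $t\in\mathbb{R}^N$, and let $\mu$ be the stationary measure for a strictly positive probability vector $(p_i)_{i\in I}$, i.e. $\mu=\sum_i p_i\,\varphi_i\mu$. If $V\in\mathrm{Gr}(k,N)$ is contained in the orthogonal complement of $t$, then the orthogonal projection $P_V$ is not injective on any Borel set of full $\mu$-measure. -/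
open MeasureTheory Metric Set
open scoped NNReal ENNReal

/-! If `φ i₂ = φ i₁ + t`, every point `x` with `φ i₁ x, φ i₂ x ∈ Y` yields two points of `Y`
differing by `t`, which have the same projection onto `V ⊆ tᗮ`. Such an `x` exists because
stationarity makes `μ.map (φ i) ≪ μ`, so each `φ i ⁻¹' Y` is `μ`-conull. -/

namespace MeasureTheory.Measure

variable {α ι : Type*} [MeasurableSpace α] [Fintype ι] {μ : Measure α} {p : ι → ℝ≥0∞}
  {φ : ι → α → α}

theorem map_absolutelyContinuous_of_eq_sum_smul_map (hstat : μ = ∑ i, p i • μ.map (φ i))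
    {i : ι} (hp : p i ≠ 0) : μ.map (φ i) ≪ μ := by
  have hle : p i • μ.map (φ i) ≤ μ :=
    (Finset.single_le_sum (f := fun j => p j • μ.map (φ j)) (fun _ _ => Measure.zero_le _)
      (Finset.mem_univ i)).trans_eq hstat.symm
  exact (absolutelyContinuous_smul hp).trans (absolutelyContinuous_of_le hle)

theorem ae_comp_of_eq_sum_smul_map (hstat : μ = ∑ i, p i • μ.map (φ i)) {i : ι}
    (hp : p i ≠ 0) (hφ : AEMeasurable (φ i) μ) {P : α → Prop} (hP : ∀ᵐ x ∂μ, P x) :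
    ∀ᵐ x ∂μ, P (φ i x) :=
  ae_of_ae_map hφ ((map_absolutelyContinuous_of_eq_sum_smul_map hstat hp).ae_le hP)

end MeasureTheory.Measure

theorem Submodule.orthogonalProjectionOnto_add_of_mem_orthogonal {E : Type*}
    [NormedAddCommGroup E] [InnerProductSpace ℝ E] {V : Submodule ℝ E} [V.HasOrthogonalProjection]
    {t : E} (ht : t ∈ Vᗮ) (x : E) :
    V.orthogonalProjectionOnto (x + t) = V.orthogonalProjectionOnto x := by
  rw [map_add, orthogonalProjectionOnto_apply_of_mem_orthogonal ht, add_zero]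

theorem ifs_translate_projection_not_injective_general (N : ℕ)
    (I : Type) [Fintype I]
    (φ : I → EuclideanSpace ℝ (Fin N) → EuclideanSpace ℝ (Fin N))
    (hcontr : ∀ i, ∃ r : ℝ≥0, r < 1 ∧ LipschitzWith r (φ i))
    (i₁ i₂ : I)
    (t : EuclideanSpace ℝ (Fin N)) (ht : t ≠ 0)
    (htrans : ∀ x, φ i₂ x = φ i₁ x + t)
    (p : I → ℝ≥0∞) (hp : ∀ i, 0 < p i)
    (μ : Measure (EuclideanSpace ℝ (Fin N))) [IsProbabilityMeasure μ]
    (hstat : μ = ∑ i, p i • μ.map (φ i))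
    (V : Submodule ℝ (EuclideanSpace ℝ (Fin N)))
    (hVt : ∀ v ∈ V, (inner ℝ v t : ℝ) = 0) :
    ∀ Y : Set (EuclideanSpace ℝ (Fin N)), MeasurableSet Y → μ Yᶜ = 0 →
      ¬ Set.InjOn (fun x => (V.orthogonalProjection x : V)) Y := by
  intro Y _ hYc hinj
  have hae : ∀ i, ∀ᵐ x ∂μ, φ i x ∈ Y := fun i =>
    have ⟨_, _, hlip⟩ := hcontr i
    Measure.ae_comp_of_eq_sum_smul_map hstat (hp i).ne' hlip.continuous.aemeasurable
      (by simpa using compl_mem_ae_iff.mpr hYc)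
  obtain ⟨x, hx₁, hx₂⟩ := ((hae i₁).and (hae i₂)).exists
  have htV : t ∈ Vᗮ := (Submodule.mem_orthogonal V t).mpr hVt
  have hsame : φ i₁ x = φ i₂ x := hinj hx₁ hx₂ <| by
    simp only [htrans, Submodule.orthogonalProjectionOnto_add_of_mem_orthogonal htV]
  rw [htrans, left_eq_add] at hsame
  exact ht hsame

/-- Proposition 5.2: let `{φ i}` be a finite family of contractions of
`ℝ^N` with `φ i₂ = φ i₁ + t` for distinct `i₁ ≠ i₂` and `t ≠ 0`, and let `μ` be the
stationary measure for a strictly positive probability vector `(p i)`.  If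
`V ∈ Gr(k,N)` is contained in the orthogonal complement of `t`, then the orthogonal
projection onto `V` is not injective on any Borel set of full `μ`-measure. -/
theorem ifs_translate_projection_not_injective (N k : ℕ)
    (I : Type) [Fintype I]
    (φ : I → EuclideanSpace ℝ (Fin N) → EuclideanSpace ℝ (Fin N))
    (hcontr : ∀ i, ∃ r : ℝ≥0, r < 1 ∧ LipschitzWith r (φ i))
    (i₁ i₂ : I) (hne : i₁ ≠ i₂)
    (t : EuclideanSpace ℝ (Fin N)) (ht : t ≠ 0)
    (htrans : ∀ x, φ i₂ x = φ i₁ x + t)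
    (p : I → ℝ≥0∞) (hp : ∀ i, 0 < p i) (hps : ∑ i, p i = 1)
    (μ : Measure (EuclideanSpace ℝ (Fin N))) [IsProbabilityMeasure μ]
    (hstat : μ = ∑ i, p i • μ.map (φ i))
    (V : Submodule ℝ (EuclideanSpace ℝ (Fin N))) (hV : Module.finrank ℝ V = k)
    (hVt : ∀ v ∈ V, (inner ℝ v t : ℝ) = 0) :
    ∀ Y : Set (EuclideanSpace ℝ (Fin N)), MeasurableSet Y → μ Yᶜ = 0 →
      ¬ Set.InjOn (fun x => (V.orthogonalProjection x : V)) Y :=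
  ifs_translate_projection_not_injective_general N I φ hcontr i₁ i₂ t ht htrans p hp μ hstat V hVt
end

section
/- Let $\mu$ be a self-similar measure in $\mathbb{R}^N$ for a homogeneous IFS $\varphi_i(x)=rO(x)+t_i$, $i\in I$ (fixed $r\in(0,1)$, fixed orthogonal $O$, translations $t_i$ not all equal). Then for every $k\in\{1,\dots,N-1\}$ there exists a $k$-dimensional linear subspace $V\subset\mathbb{R}^N$ such that the orthogonal projection $P_V$ is not injective on any Borel set of full $\mu$-measure. -/
/-!
Choose `V` of dimension `k` orthogonal to `w = t i - t j ≠ 0`. Self-similarity gives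
`p i • φ i μ ≤ μ`, so `φ i μ ≪ μ` and a `μ`-full set `Y` satisfies `φ i x ∈ Y` for `μ`-a.e. `x`,
and likewise for `j`. Any such common `x` yields two distinct points `φ i x, φ j x ∈ Y` whose
difference is `w`, hence with the same projection onto `V`.
-/

open MeasureTheory Set
open scoped ENNReal

theorem Submodule.exists_le_finrank_eq {K M : Type*} [DivisionRing K] [AddCommGroup M]
    [Module K M] (U : Submodule K M) {k : ℕ} (hk : k ≤ Module.finrank K U) :
    ∃ V ≤ U, Module.finrank K V = k := by
  obtain ⟨f, hf⟩ := exists_linearIndependent_of_le_finrank hk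
  refine ⟨(span K (range f)).map U.subtype, map_subtype_le U _, ?_⟩
  rw [finrank_map_subtype_eq, finrank_span_eq_card hf, Fintype.card_fin]

theorem exists_finrank_eq_mem_orthogonal {𝕜 E : Type*} [RCLike 𝕜] [NormedAddCommGroup E]
    [InnerProductSpace 𝕜 E] [FiniteDimensional 𝕜 E] (w : E) {k : ℕ}
    (hk : k < Module.finrank 𝕜 E) :
    ∃ V : Submodule 𝕜 E, Module.finrank 𝕜 V = k ∧ w ∈ Vᗮ := by
  have hw : Module.finrank 𝕜 (𝕜 ∙ w) ≤ 1 := by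
    simpa using finrank_span_le_card ({w} : Set E)
  have := (𝕜 ∙ w).finrank_add_finrank_orthogonal
  obtain ⟨V, hVw, hV⟩ := (𝕜 ∙ w)ᗮ.exists_le_finrank_eq (k := k) (by omega)
  refine ⟨V, hV, ?_⟩
  rwa [← Submodule.span_singleton_le_iff_mem, ← Submodule.isOrtho_iff_le,
    Submodule.isOrtho_comm, Submodule.isOrtho_iff_le]

theorem Submodule.not_injOn_orthogonalProjectionOnto {𝕜 E : Type*} [RCLike 𝕜]
    [NormedAddCommGroup E] [InnerProductSpace 𝕜 E] (K : Submodule 𝕜 E)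
    [K.HasOrthogonalProjection] {Y : Set E} {x y : E} (hx : x ∈ Y) (hy : y ∈ Y)
    (hxy : x ≠ y) (hK : x - y ∈ Kᗮ) :
    ¬ InjOn K.orthogonalProjectionOnto Y := fun hinj =>
  hxy <| hinj hx hy <| sub_eq_zero.mp <| by
    rw [← map_sub, K.orthogonalProjectionOnto_apply_of_mem_orthogonal hK]

theorem MeasureTheory.Measure.absolutelyContinuous_of_eq_sum_smul {α ι : Type*}
    [MeasurableSpace α] [Fintype ι] {μ : Measure α} {ν : ι → Measure α} {p : ι → ℝ≥0∞}
    (hμ : μ = ∑ i, p i • ν i) {i : ι} (hi : p i ≠ 0) : ν i ≪ μ :=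
  (Measure.absolutelyContinuous_smul hi).trans <| Measure.absolutelyContinuous_of_le <| by
    rw [hμ]
    exact Finset.single_le_sum (f := fun j => p j • ν j) (fun j _ => Measure.zero_le _)
      (Finset.mem_univ i)

theorem MeasureTheory.ae_comp_of_eq_sum_smul_map {α ι : Type*} [MeasurableSpace α] [Fintype ι]
    {μ : Measure α} {φ : ι → α → α} {p : ι → ℝ≥0∞} (hμ : μ = ∑ i, p i • μ.map (φ i))
    {i : ι} (hi : p i ≠ 0) (hφ : Measurable (φ i)) {P : α → Prop} (hP : ∀ᵐ y ∂μ, P y) :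
    ∀ᵐ x ∂μ, P (φ i x) :=
  ae_of_ae_map hφ.aemeasurable <| (Measure.absolutelyContinuous_of_eq_sum_smul hμ hi).ae_le hP

theorem homogeneous_self_similar_projection_not_injective_general (N : ℕ)
    (I : Type) [Fintype I]
    (r : ℝ)
    (O : EuclideanSpace ℝ (Fin N) ≃ₗᵢ[ℝ] EuclideanSpace ℝ (Fin N))
    (t : I → EuclideanSpace ℝ (Fin N)) (ht : ∃ i j : I, t i ≠ t j)
    (p : I → ℝ≥0∞) (hp : ∀ i, 0 < p i)
    (μ : Measure (EuclideanSpace ℝ (Fin N))) [IsProbabilityMeasure μ]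
    (hstat : μ = ∑ i, p i • μ.map (fun x => r • O x + t i)) :
    ∀ k : ℕ, 1 ≤ k → k ≤ N - 1 →
      ∃ V : Submodule ℝ (EuclideanSpace ℝ (Fin N)), Module.finrank ℝ V = k ∧
        ∀ Y : Set (EuclideanSpace ℝ (Fin N)), MeasurableSet Y → μ Yᶜ = 0 →
          ¬ Set.InjOn (fun x => (V.orthogonalProjection x : V)) Y := by
  intro k hk1 hkN
  obtain ⟨i, j, hij⟩ := ht
  obtain ⟨V, hV, hVij⟩ := exists_finrank_eq_mem_orthogonal (𝕜 := ℝ) (t i - t j) (k := k)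
    (by rw [finrank_euclideanSpace_fin]; omega)
  refine ⟨V, hV, fun Y _ hY => ?_⟩
  have hφ : ∀ a, Measurable fun x => r • O x + t a := fun a => by fun_prop
  obtain ⟨x, hxi, hxj⟩ :=
    ((ae_comp_of_eq_sum_smul_map hstat (hp i).ne' (hφ i) (mem_ae_iff.mpr hY)).and
      (ae_comp_of_eq_sum_smul_map hstat (hp j).ne' (hφ j) (mem_ae_iff.mpr hY))).exists
  exact V.not_injOn_orthogonalProjectionOnto hxi hxj (by simpa using hij)
    (by rwa [add_sub_add_left_eq_sub])

/-- Proposition 1.6: let `μ` be a self-similar measure in `ℝ^N` for a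
homogeneous IFS `φ i x = r O x + t i` (fixed ratio `r ∈ (0,1)`, fixed linear isometry `O`,
translations `t i` not all equal).  Then for every `k ∈ {1, …, N-1}` there is a
`k`-dimensional linear subspace `V ⊆ ℝ^N` such that the orthogonal projection onto `V` is
not injective on any Borel set of full `μ`-measure. -/
theorem homogeneous_self_similar_projection_not_injective (N : ℕ)
    (I : Type) [Fintype I]
    (r : ℝ) (hr : r ∈ Set.Ioo (0 : ℝ) 1)
    (O : EuclideanSpace ℝ (Fin N) ≃ₗᵢ[ℝ] EuclideanSpace ℝ (Fin N))
    (t : I → EuclideanSpace ℝ (Fin N)) (ht : ∃ i j : I, t i ≠ t j)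
    (p : I → ℝ≥0∞) (hp : ∀ i, 0 < p i) (hps : ∑ i, p i = 1)
    (μ : Measure (EuclideanSpace ℝ (Fin N))) [IsProbabilityMeasure μ]
    (hstat : μ = ∑ i, p i • μ.map (fun x => r • O x + t i)) :
    ∀ k : ℕ, 1 ≤ k → k ≤ N - 1 →
      ∃ V : Submodule ℝ (EuclideanSpace ℝ (Fin N)), Module.finrank ℝ V = k ∧
        ∀ Y : Set (EuclideanSpace ℝ (Fin N)), MeasurableSet Y → μ Yᶜ = 0 →
          ¬ Set.InjOn (fun x => (V.orthogonalProjection x : V)) Y :=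
  homogeneous_self_similar_projection_not_injective_general N I r O t ht p hp μ hstat
end

section
/- Let $0<s<k$, $t=k/(k-s)$, $r_i=2^{-i}$, $\ell_i=2^{-ti}$, and for each $(k+1)$-element subset $J\subset\{1,\dots,N\}$ let $X_{J,i}$ be a maximal $\ell_i$-separated subset of the scaled sphere $r_iS_J$, where $S_J=\{x\in\mathbb{R}^N:\sum_{j\in J}x_j^2=1,\ x_j=0\ (j\notin J)\}$. Set $X_J=\bigcup_i X_{J,i}\cup\{0\}$ and $X=\bigcup_J X_J$. Then the lower and upper box-counting dimensions of $X$ both equal $s=k(t-1)/t$. -/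
/-!
At scale `δ`, the level `i` with `ℓᵢ ≈ δ` already forces `≈ (rᵢ / ℓᵢ) ^ k = ℓᵢ ^ (-s) ≈ δ ^ (-s)`
balls: the net `X_{J,i}` is `ℓᵢ`-separated and, having maximal cardinality, is at least as large
as a grid of that size on the `k`-sphere `rᵢ S_J`. Conversely, all spheres of radius `< δ` fit in
one ball around `0`, and each of the `O(log 1/δ)` remaining levels is covered by a maximal
`δ`-separated subset of `X_{J,i}`. By volume packing on the sphere, that subset has
`≲ min ((rᵢ / ℓᵢ) ^ k, (rᵢ / δ) ^ k) ≤ δ ^ (-s)` points. Hence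
`δ ^ (-s) ≲ N(X, δ) ≲ δ ^ (-s) log (1/δ)`, and both box dimensions equal `s`.
-/

open MeasureTheory Metric Set Filter
open scoped NNReal ENNReal Topology

/-- The minimal number of balls of radius `δ` needed to cover `X`. -/
noncomputable def coverNum {α : Type*} [PseudoMetricSpace α] (X : Set α) (δ : ℝ) : ℕ :=
  sInf {n | ∃ F : Finset α, F.card = n ∧ X ⊆ ⋃ c ∈ F, Metric.closedBall c δ}

/-- The upper box-counting (Minkowski) dimension. -/
noncomputable def upperBoxDim {α : Type*} [PseudoMetricSpace α] (X : Set α) : ℝ :=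
  Filter.limsup (fun δ : ℝ => Real.log (coverNum X δ) / (-Real.log δ)) (𝓝[>] 0)

/-- The lower box-counting (Minkowski) dimension. -/
noncomputable def lowerBoxDim {α : Type*} [PseudoMetricSpace α] (X : Set α) : ℝ :=
  Filter.liminf (fun δ : ℝ => Real.log (coverNum X δ) / (-Real.log δ)) (𝓝[>] 0)

/-- The `k`-dimensional sphere of radius `r` spanned by the coordinates in `J`:
`{x ∈ ℝ^N : ∑_{j ∈ J} x_j² = r², x_j = 0 for j ∉ J}`. -/
def sphereJ (N : ℕ) (J : Finset (Fin N)) (r : ℝ) : Set (EuclideanSpace ℝ (Fin N)) :=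
  {x | ∑ j ∈ J, (x j) ^ 2 = r ^ 2 ∧ ∀ j ∉ J, x j = 0}

section Covering

variable {α : Type*} [PseudoMetricSpace α]

theorem coverNum_le_card {X : Set α} {δ : ℝ} {F : Finset α}
    (hF : X ⊆ ⋃ c ∈ F, closedBall c δ) : coverNum X δ ≤ F.card :=
  Nat.sInf_le ⟨F, rfl, hF⟩

theorem card_le_coverNum {X : Set α} (hX : TotallyBounded X) {δ : ℝ} (hδ : 0 < δ)
    {S : Finset α} (hSX : ↑S ⊆ X) (hsep : (S : Set α).Pairwise (2 * δ < dist · ·)) :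
    S.card ≤ coverNum X δ := by
  classical
  obtain ⟨F₀, hF₀⟩ : ∃ F : Finset α, X ⊆ ⋃ c ∈ F, closedBall c δ := by
    obtain ⟨F, hF, hXF⟩ := Metric.totallyBounded_iff.1 hX δ hδ
    refine ⟨hF.toFinset, hXF.trans (iUnion₂_mono' fun c hc => ⟨c, by simpa using hc, ?_⟩)⟩
    exact ball_subset_closedBall
  obtain ⟨F, hcard, hcov⟩ := Nat.sInf_mem (s := {n | ∃ F : Finset α, F.card = n ∧
    X ⊆ ⋃ c ∈ F, closedBall c δ}) ⟨_, F₀, rfl, hF₀⟩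
  have hcenter : ∀ p ∈ S, ∃ c ∈ F, p ∈ closedBall c δ := fun p hp => by
    simpa using hcov (hSX hp)
  choose! c hcF hpc using hcenter
  rw [coverNum, ← hcard]
  refine Finset.card_le_card_of_injOn c hcF fun p hp q hq hcpq => by_contra fun hpq => ?_
  have := hsep hp hq hpq
  linarith [dist_triangle_right p q (c p), mem_closedBall.1 (hpc p hp),
    hcpq ▸ mem_closedBall.1 (hpc q hq)]

theorem Finset.exists_subset_pairwise_covering (A : Finset α) {δ : ℝ} (hδ : 0 ≤ δ) :
    ∃ W ⊆ A, (W : Set α).Pairwise (δ ≤ dist · ·) ∧ ↑A ⊆ ⋃ c ∈ W, closedBall c δ := by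
  classical
  obtain ⟨W, hW, hmax⟩ := Finset.exists_max_image
    (A.powerset.filter fun W : Finset α => (W : Set α).Pairwise (δ ≤ dist · ·)) Finset.card
    ⟨∅, by simp⟩
  rw [Finset.mem_filter, Finset.mem_powerset] at hW
  refine ⟨W, hW.1, hW.2, fun x hxA => by_contra fun hxW => ?_⟩
  simp only [mem_iUnion, mem_closedBall, not_exists, not_le] at hxW
  have hx : x ∉ W := fun h => by linarith [hxW x h, dist_self x]
  have hins := hmax (insert x W) <| Finset.mem_filter.2 ⟨Finset.mem_powerset.2
    (Finset.insert_subset hxA hW.1), by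
      rw [Finset.coe_insert]
      exact hW.2.insert fun y hy _ => ⟨(hxW y hy).le, (dist_comm x y ▸ hxW y hy).le⟩⟩
  rw [Finset.card_insert_of_notMem hx] at hins
  omega

theorem coverNum_le_of_subset_closedBall_union {ι : Type*} {X : Set α} {δ K : ℝ} {c : α}
    {s : Finset ι} {A : ι → Set α}
    (hX : X ⊆ closedBall c δ ∪ ⋃ i ∈ s, A i)
    (hA : ∀ i ∈ s, ∃ W : Finset α, A i ⊆ ⋃ w ∈ W, closedBall w δ ∧ (W.card : ℝ) ≤ K) :
    (coverNum X δ : ℝ) ≤ 1 + s.card * K := by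
  classical
  choose! W hWcov hWcard using hA
  have hcov : X ⊆ ⋃ w ∈ insert c (s.biUnion W), closedBall w δ := by
    intro x hx
    rcases hX hx with hx | hx
    · exact mem_iUnion₂.2 ⟨c, Finset.mem_insert_self _ _, hx⟩
    obtain ⟨i, hi, hxi⟩ := mem_iUnion₂.1 hx
    obtain ⟨w, hw, hxw⟩ := mem_iUnion₂.1 (hWcov i hi hxi)
    exact mem_iUnion₂.2 ⟨w, Finset.mem_insert_of_mem (Finset.mem_biUnion.2 ⟨i, hi, hw⟩), hxw⟩
  calc (coverNum X δ : ℝ) ≤ (insert c (s.biUnion W)).card := by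
        exact_mod_cast coverNum_le_card hcov
    _ ≤ 1 + ∑ i ∈ s, ((W i).card : ℝ) := by
        rw [add_comm]
        exact_mod_cast (Finset.card_insert_le _ _).trans (by gcongr; exact Finset.card_biUnion_le)
    _ ≤ 1 + s.card * K := by
        rw [← nsmul_eq_mul, ← Finset.sum_const]
        gcongr with i hi
        exact hWcard i hi

theorem eventually_le_coverNum_of_pairwise_pow {X : Set α} (hX : TotallyBounded X) {ρ : ℝ}
    (hρ0 : 0 < ρ) (hρ1 : ρ < 1) {S : ℕ → Finset α} {c s : ℝ} (hc : 0 < c) (hs : 0 ≤ s)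
    (hS : ∀ᶠ i in atTop, ↑(S i) ⊆ X ∧ (S i : Set α).Pairwise (ρ ^ i ≤ dist · ·) ∧
      c * (ρ ^ i) ^ (-s) ≤ (S i).card) :
    ∃ c' > 0, ∀ᶠ δ in 𝓝[>] 0, c' * δ ^ (-s) ≤ coverNum X δ := by
  obtain ⟨n₀, hn₀⟩ := eventually_atTop.1 hS
  refine ⟨c * (3 / ρ) ^ (-s), by positivity, ?_⟩
  filter_upwards [Ioo_mem_nhdsGT (by positivity : (0 : ℝ) < ρ ^ (n₀ + 1) / 3)] with δ ⟨hδ0, hδ⟩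
  have h3δ : 3 * δ < ρ ^ (n₀ + 1) := by linarith
  obtain ⟨n, hn1, hn2⟩ := exists_nat_pow_near_of_lt_one (by positivity : 0 < 3 * δ)
    (h3δ.le.trans (pow_le_one₀ hρ0.le hρ1.le)) hρ0 hρ1
  have hn : n₀ ≤ n := by
    have := (pow_lt_pow_iff_right_of_lt_one₀ hρ0 hρ1).1 (hn1.trans h3δ)
    omega
  obtain ⟨hSX, hsep, hcard⟩ := hn₀ n hn
  have hρn : ρ ^ n ≤ 3 * δ / ρ := by
    rw [le_div_iff₀ hρ0, ← pow_succ]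
    exact hn1.le
  calc c * (3 / ρ) ^ (-s) * δ ^ (-s) = c * (3 * δ / ρ) ^ (-s) := by
        rw [mul_assoc, ← Real.mul_rpow (by positivity) hδ0.le, div_mul_eq_mul_div]
    _ ≤ c * (ρ ^ n) ^ (-s) :=
        mul_le_mul_of_nonneg_left (Real.rpow_le_rpow_of_nonpos (by positivity) hρn
          (neg_nonpos.2 hs)) hc.le
    _ ≤ (S n).card := hcard
    _ ≤ coverNum X δ := by
        exact_mod_cast card_le_coverNum hX hδ0 hSX (hsep.mono' fun p q h => by linarith)

end Covering

theorem tendsto_log_div_neg_log {f : ℝ → ℝ} {c B s : ℝ} (hc : 0 < c) (hB : 0 < B)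
    (hlow : ∀ᶠ δ in 𝓝[>] 0, c * δ ^ (-s) ≤ f δ)
    (hup : ∀ᶠ δ in 𝓝[>] 0, f δ ≤ B * -Real.log δ * δ ^ (-s)) :
    Tendsto (fun δ => Real.log (f δ) / -Real.log δ) (𝓝[>] 0) (𝓝 s) := by
  have hL : Tendsto (fun δ => -Real.log δ) (𝓝[>] 0) atTop :=
    tendsto_neg_atBot_atTop.comp Real.tendsto_log_nhdsGT_zero
  have hlo : Tendsto (fun δ => s + Real.log c / -Real.log δ) (𝓝[>] 0) (𝓝 s) := by
    simpa using tendsto_const_nhds.add (tendsto_const_nhds.div_atTop hL)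
  have hhi : Tendsto (fun δ => s + (Real.log B / -Real.log δ +
      Real.log (-Real.log δ) / -Real.log δ)) (𝓝[>] 0) (𝓝 s) := by
    have hlog : Tendsto (fun x => Real.log x / x) atTop (𝓝 0) := by
      simpa using Real.tendsto_pow_log_div_mul_add_atTop 1 0 1 one_ne_zero
    simpa using tendsto_const_nhds.add ((tendsto_const_nhds.div_atTop hL).add (hlog.comp hL))
  have hsmall : ∀ᶠ δ in 𝓝[>] (0 : ℝ), 0 < δ ∧ 0 < -Real.log δ := by
    filter_upwards [Ioo_mem_nhdsGT one_pos] with δ ⟨hδ0, hδ1⟩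
    exact ⟨hδ0, neg_pos.2 (Real.log_neg hδ0 hδ1)⟩
  refine tendsto_of_tendsto_of_tendsto_of_le_of_le' hlo hhi ?_ ?_
  · filter_upwards [hlow, hsmall] with δ hδ ⟨hδ0, hL0⟩
    have := Real.log_le_log (by positivity) hδ
    rw [Real.log_mul hc.ne' (by positivity), Real.log_rpow hδ0] at this
    rw [le_div_iff₀ hL0, add_mul, div_mul_cancel₀ _ hL0.ne']
    linarith
  · filter_upwards [hlow, hup, hsmall] with δ hδl hδu ⟨hδ0, hL0⟩
    have := Real.log_le_log (lt_of_lt_of_le (by positivity) hδl) hδu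
    rw [Real.log_mul (by positivity) (by positivity), Real.log_mul hB.ne' hL0.ne',
      Real.log_rpow hδ0] at this
    rw [div_le_iff₀ hL0, add_mul, add_mul, div_mul_cancel₀ _ hL0.ne', div_mul_cancel₀ _ hL0.ne']
    linarith

theorem card_mul_pow_le_of_pairwise_sphere {E : Type*} [NormedAddCommGroup E] [NormedSpace ℝ E]
    [FiniteDimensional ℝ E] {T : Finset E} {c : E} {r ℓ : ℝ} (hℓ : 0 < ℓ) (hℓr : ℓ ≤ r)
    (hT : ↑T ⊆ sphere c r) (hsep : (T : Set E).Pairwise (ℓ ≤ dist · ·)) :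
    T.card * (ℓ / 2) ^ Module.finrank ℝ E ≤
      (r + ℓ / 2) ^ Module.finrank ℝ E - (r - ℓ / 2) ^ Module.finrank ℝ E := by
  -- the disjoint balls `ball p (ℓ / 2)` and `ball c (r - ℓ / 2)` all lie in `ball c (r + ℓ / 2)`
  borelize E
  set μ : Measure E := Measure.addHaar
  set d := Module.finrank ℝ E
  have hball : ∀ x {ρ : ℝ}, 0 < ρ → μ (ball x ρ) = ENNReal.ofReal (ρ ^ d) * μ (ball 0 1) :=
    fun x _ hρ => Measure.addHaar_ball_of_pos μ x hρ
  have hdisj : (T : Set E).PairwiseDisjoint (ball · (ℓ / 2)) := fun p hp q hq hpq =>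
    ball_disjoint_ball (by linarith [hsep hp hq hpq])
  have hinner : Disjoint (⋃ p ∈ T, ball p (ℓ / 2)) (ball c (r - ℓ / 2)) := by
    refine Set.disjoint_left.2 fun z hz hzc => ?_
    obtain ⟨p, hp, hzp⟩ := mem_iUnion₂.1 hz
    have := dist_triangle p z c
    rw [mem_sphere.1 (hT hp)] at this
    rw [mem_ball] at hzp hzc
    linarith [dist_comm p z]
  have hsub : (⋃ p ∈ T, ball p (ℓ / 2)) ∪ ball c (r - ℓ / 2) ⊆ ball c (r + ℓ / 2) := by
    refine union_subset (iUnion₂_subset fun p hp z hz => ?_) (ball_subset_ball (by linarith))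
    rw [mem_ball] at hz ⊢
    linarith [dist_triangle z p c, mem_sphere.1 (hT hp)]
  have hvol := measure_mono (μ := μ) hsub
  rw [measure_union hinner measurableSet_ball, measure_biUnion_finset hdisj
    (fun _ _ => measurableSet_ball), Finset.sum_congr rfl fun p _ => hball p (by positivity),
    Finset.sum_const, nsmul_eq_mul, hball c (by linarith), hball c (by linarith), ← mul_assoc,
    ← add_mul, ENNReal.mul_le_mul_iff_left (measure_ball_pos μ _ one_pos).ne'
      measure_ball_lt_top.ne, ← ENNReal.ofReal_natCast, ← ENNReal.ofReal_mul (by positivity),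
    ← ENNReal.ofReal_add (by positivity) (pow_nonneg (by linarith) _),
    ENNReal.ofReal_le_ofReal_iff (pow_nonneg (by linarith) _)] at hvol
  linarith

theorem card_le_of_pairwise_sphere {E : Type*} [NormedAddCommGroup E] [NormedSpace ℝ E]
    [FiniteDimensional ℝ E] [Nontrivial E] {T : Finset E} {c : E} {r ℓ : ℝ} (hℓ : 0 < ℓ)
    (hℓr : ℓ ≤ r) (hT : ↑T ⊆ sphere c r) (hsep : (T : Set E).Pairwise (ℓ ≤ dist · ·)) :
    (T.card : ℝ) ≤ 2 * Module.finrank ℝ E * (3 * r / ℓ) ^ (Module.finrank ℝ E - 1) := by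
  obtain ⟨d, hd⟩ : ∃ d, Module.finrank ℝ E = d + 1 :=
    Nat.exists_eq_succ_of_ne_zero Module.finrank_pos.ne'
  have hvol := card_mul_pow_le_of_pairwise_sphere hℓ hℓr hT hsep
  have hr : 0 ≤ r - ℓ / 2 := by linarith
  have hdiff : (r + ℓ / 2) ^ (d + 1) - (r - ℓ / 2) ^ (d + 1) ≤ ℓ * ↑(d + 1) * (r + ℓ / 2) ^ d := by
    have := abs_pow_sub_pow_le (r + ℓ / 2) (r - ℓ / 2) (d + 1)
    rw [show r + ℓ / 2 - (r - ℓ / 2) = ℓ by ring, abs_of_pos hℓ, abs_of_nonneg hr,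
      abs_of_nonneg (show 0 ≤ r + ℓ / 2 by linarith), max_eq_left (by linarith),
      Nat.add_sub_cancel] at this
    exact (le_abs_self _).trans this
  have hmax : (r + ℓ / 2) ^ d ≤ (ℓ / 2 * (3 * r / ℓ)) ^ d :=
    pow_le_pow_left₀ (by linarith) (by field_simp; linarith) d
  rw [hd] at hvol ⊢
  rw [Nat.add_sub_cancel, ← mul_le_mul_iff_of_pos_right (by positivity : 0 < (ℓ / 2) ^ (d + 1))]
  calc (T.card : ℝ) * (ℓ / 2) ^ (d + 1) ≤ ℓ * ↑(d + 1) * (r + ℓ / 2) ^ d := by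
        linarith
    _ ≤ ℓ * ↑(d + 1) * (ℓ / 2 * (3 * r / ℓ)) ^ d := by gcongr
    _ = _ := by rw [mul_pow, pow_succ]; push_cast; ring

theorem dist_toLp_restrict_eq {ι : Type*} [Fintype ι] {J : Finset ι} {x y : EuclideanSpace ℝ ι}
    (hx : ∀ i ∉ J, x i = 0) (hy : ∀ i ∉ J, y i = 0) :
    dist (WithLp.toLp 2 fun j : J => x j) (WithLp.toLp 2 fun j : J => y j) = dist x y := by
  rw [EuclideanSpace.dist_eq, EuclideanSpace.dist_eq]
  congr 1
  rw [Finset.sum_coe_sort J fun i => dist (x i) (y i) ^ 2]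
  exact Finset.sum_subset (Finset.subset_univ J) fun i _ hi => by simp [hx i hi, hy i hi]

theorem norm_eq_of_mem_sphereJ {N : ℕ} {J : Finset (Fin N)} {r : ℝ} (hr : 0 ≤ r)
    {x : EuclideanSpace ℝ (Fin N)} (hx : x ∈ sphereJ N J r) : ‖x‖ = r := by
  rw [EuclideanSpace.norm_eq, ← Real.sqrt_sq hr, ← hx.1]
  congr 1
  refine (Finset.sum_subset (Finset.subset_univ J) fun i _ hi => ?_).symm.trans ?_
  · simp [hx.2 i hi]
  · simp [sq_abs]

theorem card_le_of_pairwise_sphereJ {N k : ℕ} {J : Finset (Fin N)} (hJ : J.card = k + 1)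
    {T : Finset (EuclideanSpace ℝ (Fin N))} {r ℓ : ℝ} (hℓ : 0 < ℓ) (hℓr : ℓ ≤ r)
    (hT : ↑T ⊆ sphereJ N J r)
    (hsep : (T : Set (EuclideanSpace ℝ (Fin N))).Pairwise (ℓ ≤ dist · ·)) :
    (T.card : ℝ) ≤ 2 * (k + 1) * 3 ^ k * (r / ℓ) ^ k := by
  classical
  let π : EuclideanSpace ℝ (Fin N) → EuclideanSpace ℝ J := fun x => WithLp.toLp 2 fun j => x j
  have hπ : ∀ x ∈ T, ∀ y ∈ T, dist (π x) (π y) = dist x y := fun x hx y hy =>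
    dist_toLp_restrict_eq (hT hx).2 (hT hy).2
  have hinj : Set.InjOn π ↑T := fun x hx y hy hxy =>
    dist_eq_zero.1 (by rw [← hπ x hx y hy, hxy, dist_self])
  have hsphere : ↑(T.image π) ⊆ sphere (0 : EuclideanSpace ℝ J) r := by
    rw [Finset.coe_image]
    rintro _ ⟨x, hx, rfl⟩
    have h0 : dist (π x) (π 0) = dist x 0 := dist_toLp_restrict_eq (hT hx).2 fun _ _ => rfl
    rw [mem_sphere, show (0 : EuclideanSpace ℝ J) = π 0 from rfl, h0, dist_zero_right,
      norm_eq_of_mem_sphereJ (hℓ.le.trans hℓr) (hT hx)]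
  have hsep' : (↑(T.image π) : Set (EuclideanSpace ℝ J)).Pairwise (ℓ ≤ dist · ·) := by
    rw [Finset.coe_image]
    rintro _ ⟨x, hx, rfl⟩ _ ⟨y, hy, rfl⟩ hxy
    rw [hπ x hx y hy]
    exact hsep hx hy fun h => hxy (h ▸ rfl)
  have : Nonempty J := (Finset.card_pos.1 (by omega)).to_subtype
  have hbound := card_le_of_pairwise_sphere hℓ hℓr hsphere hsep'
  rw [Finset.card_image_of_injOn hinj, finrank_euclideanSpace, Fintype.card_coe, hJ] at hbound
  rw [mul_assoc _ (3 ^ k), ← mul_pow, mul_div_assoc']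
  exact_mod_cast hbound

theorem exists_cover_of_pairwise_sphereJ {N k : ℕ} {J : Finset (Fin N)} (hJ : J.card = k + 1)
    {A : Finset (EuclideanSpace ℝ (Fin N))} {r ℓ δ : ℝ} (hℓ : 0 < ℓ) (hℓr : ℓ ≤ r) (hδ : 0 < δ)
    (hδr : δ ≤ r) (hA : ↑A ⊆ sphereJ N J r)
    (hsep : (A : Set (EuclideanSpace ℝ (Fin N))).Pairwise (ℓ ≤ dist · ·)) :
    ∃ W : Finset (EuclideanSpace ℝ (Fin N)), ↑A ⊆ ⋃ c ∈ W, closedBall c δ ∧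
      (W.card : ℝ) ≤ 2 * (k + 1) * 3 ^ k * min ((r / ℓ) ^ k) ((r / δ) ^ k) := by
  obtain ⟨W, hWA, hWsep, hcov⟩ := A.exists_subset_pairwise_covering hδ.le
  refine ⟨W, hcov, ?_⟩
  rw [mul_min_of_nonneg _ _ (by positivity)]
  refine le_min ?_ (card_le_of_pairwise_sphereJ hJ hδ hδr
    ((Finset.coe_subset.2 hWA).trans hA) hWsep)
  exact (Nat.cast_le.2 (Finset.card_le_card hWA)).trans
    (card_le_of_pairwise_sphereJ hJ hℓ hℓr hA hsep)

noncomputable def gridPoint {N : ℕ} (J : Finset (Fin N)) (j₀ : Fin N) (r ℓ : ℝ)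
    (v : Fin N → ℤ) : EuclideanSpace ℝ (Fin N) :=
  WithLp.toLp 2 fun j => if j = j₀ then √(r ^ 2 - ∑ i ∈ J, (ℓ * v i) ^ 2) else ℓ * v j

theorem gridPoint_mem_sphereJ {N : ℕ} {J : Finset (Fin N)} {j₀ : Fin N} (hj₀ : j₀ ∉ J)
    {r ℓ : ℝ} {v : Fin N → ℤ} (hv : ∀ j ∉ J, v j = 0) (hr : ∑ i ∈ J, (ℓ * v i) ^ 2 ≤ r ^ 2) :
    gridPoint J j₀ r ℓ v ∈ sphereJ N (insert j₀ J) r := by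
  refine ⟨?_, fun j hj => ?_⟩
  · rw [Finset.sum_insert hj₀, Finset.sum_congr rfl fun i hi =>
      show (gridPoint J j₀ r ℓ v i) ^ 2 = (ℓ * v i) ^ 2 by
        simp [gridPoint, ne_of_mem_of_not_mem hi hj₀]]
    simp only [gridPoint, ↓reduceIte]
    rw [Real.sq_sqrt (sub_nonneg.2 hr)]
    ring
  · rw [Finset.mem_insert, not_or] at hj
    simp [gridPoint, hj.1, hv j hj.2]

theorem le_dist_gridPoint {N : ℕ} (J : Finset (Fin N)) {j₀ : Fin N} (r : ℝ) {ℓ : ℝ}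
    (hℓ : 0 ≤ ℓ) {v w : Fin N → ℤ} (hj₀ : v j₀ = w j₀) (hvw : v ≠ w) :
    ℓ ≤ dist (gridPoint J j₀ r ℓ v) (gridPoint J j₀ r ℓ w) := by
  obtain ⟨j, hj⟩ := Function.ne_iff.1 hvw
  have hjj₀ : j ≠ j₀ := fun h => hj (h ▸ hj₀)
  have hdiff : (1 : ℝ) ≤ |(v j : ℝ) - w j| := by exact_mod_cast Int.one_le_abs (sub_ne_zero.2 hj)
  calc ℓ ≤ ℓ * |(v j : ℝ) - w j| := le_mul_of_one_le_right hℓ hdiff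
    _ = dist (gridPoint J j₀ r ℓ v j) (gridPoint J j₀ r ℓ w j) := by
      simp [gridPoint, hjj₀, Real.dist_eq, ← mul_sub, abs_mul, abs_of_nonneg hℓ]
    _ ≤ dist (gridPoint J j₀ r ℓ v) (gridPoint J j₀ r ℓ w) := PiLp.dist_apply_le _ _ _

theorem exists_grid_sphereJ {N : ℕ} {J : Finset (Fin N)} {j₀ : Fin N} (hj₀ : j₀ ∉ J)
    {r ℓ : ℝ} (hℓ : 0 < ℓ) (M : ℕ) (hM : J.card * (M * ℓ) ^ 2 ≤ r ^ 2) :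
    ∃ T : Finset (EuclideanSpace ℝ (Fin N)), ↑T ⊆ sphereJ N (insert j₀ J) r ∧
      (T : Set (EuclideanSpace ℝ (Fin N))).Pairwise (ℓ ≤ dist · ·) ∧ T.card = M ^ J.card := by
  classical
  let V : Finset (Fin N → ℤ) :=
    Fintype.piFinset fun j => if j ∈ J then Finset.Icc 1 (M : ℤ) else {0}
  have hV : ∀ v ∈ V, ∀ j, (j ∈ J → 1 ≤ v j ∧ v j ≤ M) ∧ (j ∉ J → v j = 0) := by
    intro v hv j
    have := Fintype.mem_piFinset.1 hv j
    constructor <;> intro hj <;> simpa [hj] using this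
  have hsum : ∀ v ∈ V, ∑ i ∈ J, (ℓ * v i) ^ 2 ≤ r ^ 2 := by
    intro v hv
    refine le_trans ?_ hM
    rw [← nsmul_eq_mul, ← Finset.sum_const]
    refine Finset.sum_le_sum fun i hi => ?_
    obtain ⟨h1, h2⟩ := (hV v hv i).1 hi
    have h1' : (0 : ℝ) ≤ v i := by exact_mod_cast zero_le_one.trans h1
    have h2' : (v i : ℝ) ≤ M := by exact_mod_cast h2
    rw [mul_comm (M : ℝ)]
    exact pow_le_pow_left₀ (mul_nonneg hℓ.le h1') (mul_le_mul_of_nonneg_left h2' hℓ.le) 2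
  have hsep : ∀ v ∈ V, ∀ w ∈ V, v ≠ w →
      ℓ ≤ dist (gridPoint J j₀ r ℓ v) (gridPoint J j₀ r ℓ w) := fun v hv w hw =>
    le_dist_gridPoint J r hℓ.le (((hV v hv j₀).2 hj₀).trans ((hV w hw j₀).2 hj₀).symm)
  have hinj : Set.InjOn (gridPoint J j₀ r ℓ) ↑V := fun v hv w hw hvw => by_contra fun hne => by
    have := hsep v hv w hw hne
    rw [hvw, dist_self] at this
    linarith
  refine ⟨V.image (gridPoint J j₀ r ℓ), ?_, ?_, ?_⟩
  · rw [Finset.coe_image]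
    rintro _ ⟨v, hv, rfl⟩
    exact gridPoint_mem_sphereJ hj₀ (fun j hj => (hV v hv j).2 hj) (hsum v hv)
  · rw [Finset.coe_image]
    rintro _ ⟨v, hv, rfl⟩ _ ⟨w, hw, rfl⟩ hvw
    exact hsep v hv w hw fun h => hvw (h ▸ rfl)
  · rw [Finset.card_image_of_injOn hinj, Fintype.card_piFinset]
    simp [apply_ite Finset.card, Finset.prod_ite_mem]

theorem exists_pairwise_sphereJ_card_ge {N k : ℕ} {J : Finset (Fin N)} (hJ : J.card = k + 1)
    (hk : 0 < k) {r ℓ : ℝ} (hℓ : 0 < ℓ) (hr : 2 * k * ℓ ≤ r) :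
    ∃ T : Finset (EuclideanSpace ℝ (Fin N)), ↑T ⊆ sphereJ N J r ∧
      (T : Set (EuclideanSpace ℝ (Fin N))).Pairwise (ℓ ≤ dist · ·) ∧
      (r / (2 * k * ℓ)) ^ k ≤ T.card := by
  obtain ⟨j₀, hj₀⟩ := Finset.card_pos.1 (by omega : 0 < J.card)
  have hcard : (J.erase j₀).card = k := by rw [Finset.card_erase_of_mem hj₀, hJ]; rfl
  have hk' : (1 : ℝ) ≤ k := by exact_mod_cast hk
  have hkℓ : 0 < k * ℓ := by positivity
  set M := ⌊r / (k * ℓ)⌋₊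
  have hr0 : 0 ≤ r := le_trans (by positivity) hr
  have hMℓ : M * ℓ ≤ r / k := calc
    M * ℓ ≤ r / (k * ℓ) * ℓ := by gcongr; exact Nat.floor_le (by positivity)
    _ = r / k := by field_simp
  have hM : ((J.erase j₀).card : ℝ) * (M * ℓ) ^ 2 ≤ r ^ 2 := by
    rw [hcard]
    calc (k : ℝ) * (M * ℓ) ^ 2 ≤ k * (r / k) ^ 2 := by gcongr
      _ = r ^ 2 / k := by field_simp
      _ ≤ r ^ 2 := div_le_self (sq_nonneg r) hk'
  obtain ⟨T, hT, hsep, hTcard⟩ := exists_grid_sphereJ (Finset.notMem_erase j₀ J) hℓ M hM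
  rw [Finset.insert_erase hj₀] at hT
  refine ⟨T, hT, hsep, ?_⟩
  have hhalf : r / (2 * k * ℓ) ≤ M := by
    have h2 : 2 ≤ r / (k * ℓ) := by rw [le_div_iff₀ hkℓ]; linarith
    have := Nat.sub_one_lt_floor (r / (k * ℓ))
    rw [show r / (2 * k * ℓ) = r / (k * ℓ) / 2 by ring]
    linarith
  rw [hTcard, hcard, Nat.cast_pow]
  gcongr

theorem min_pow_le_rpow_neg {r δ s t : ℝ} {k : ℕ} (hr : 0 < r) (hδ : 0 < δ) (ht : 0 < t)
    (hs : 0 ≤ s) (hts : (t - 1) * k = s * t) :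
    min ((r / r ^ t) ^ k) ((r / δ) ^ k) ≤ δ ^ (-s) := by
  rcases le_or_gt δ (r ^ t) with h | h
  · refine min_le_of_left_le ?_
    calc (r / r ^ t) ^ k = (r ^ t) ^ (-s) := by
          rw [← Real.rpow_natCast, ← Real.rpow_mul hr.le]
          nth_rw 1 [← Real.rpow_one r]
          rw [← Real.rpow_sub hr, ← Real.rpow_mul hr.le]
          congr 1
          linear_combination -hts
      _ ≤ δ ^ (-s) := Real.rpow_le_rpow_of_nonpos hδ h (neg_nonpos.2 hs)
  · refine min_le_of_right_le ?_
    have hrδ : r ≤ δ ^ t⁻¹ := by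
      calc r = (r ^ t) ^ t⁻¹ := by rw [← Real.rpow_mul hr.le, mul_inv_cancel₀ ht.ne', Real.rpow_one]
        _ ≤ δ ^ t⁻¹ := Real.rpow_le_rpow (by positivity) h.le (by positivity)
    calc (r / δ) ^ k ≤ (δ ^ t⁻¹ / δ) ^ k := by gcongr
      _ = δ ^ (-s) := by
          rw [← Real.rpow_natCast, ← Real.rpow_sub_one hδ.ne', ← Real.rpow_mul hδ.le]
          congr 1
          field_simp
          linear_combination -hts

theorem le_two_rpow_neg_iff_le_floor_logb {δ : ℝ} (hδ0 : 0 < δ) (hδ1 : δ ≤ 1) (j : ℕ) :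
    δ ≤ (2 : ℝ) ^ (-(j : ℝ)) ↔ j ≤ ⌊Real.logb 2 δ⁻¹⌋₊ := by
  rw [Nat.le_floor_iff (Real.logb_nonneg one_lt_two ((one_le_inv₀ hδ0).2 hδ1)),
    Real.le_logb_iff_rpow_le one_lt_two (inv_pos.2 hδ0), Real.rpow_neg zero_le_two,
    le_inv_comm₀ hδ0 (by positivity)]

theorem exists_cover_card_le_of_sphereJ_net {N k : ℕ} {J : Finset (Fin N)}
    (hJ : J.card = k + 1) {s t : ℝ} (hs : 0 ≤ s) (ht : 1 < t) (hts : (t - 1) * k = s * t)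
    {j : ℕ} {A : Finset (EuclideanSpace ℝ (Fin N))}
    (hA : ↑A ⊆ sphereJ N J ((2 : ℝ) ^ (-(j : ℝ))))
    (hsep : (A : Set (EuclideanSpace ℝ (Fin N))).Pairwise ((2 : ℝ) ^ (-(t * j)) ≤ dist · ·))
    {δ : ℝ} (hδ : 0 < δ) (hδj : δ ≤ 2 ^ (-(j : ℝ))) :
    ∃ W : Finset (EuclideanSpace ℝ (Fin N)), ↑A ⊆ ⋃ c ∈ W, closedBall c δ ∧
      (W.card : ℝ) ≤ 2 * (k + 1) * 3 ^ k * δ ^ (-s) := by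
  have hℓ : (2 : ℝ) ^ (-(t * j)) = (2 ^ (-(j : ℝ))) ^ t := by
    rw [← Real.rpow_mul zero_le_two]
    ring_nf
  have hℓr : (2 : ℝ) ^ (-(t * j)) ≤ 2 ^ (-(j : ℝ)) :=
    Real.rpow_le_rpow_of_exponent_le one_le_two (by nlinarith [(Nat.cast_nonneg j : (0 : ℝ) ≤ j)])
  obtain ⟨W, hcov, hcard⟩ := exists_cover_of_pairwise_sphereJ hJ (by positivity) hℓr hδ hδj hA hsep
  refine ⟨W, hcov, hcard.trans ?_⟩
  rw [hℓ]
  exact mul_le_mul_of_nonneg_left (min_pow_le_rpow_neg (by positivity) hδ (by linarith) hs hts)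
    (by positivity)

theorem eventually_le_coverNum_of_sphereJ_nets {N k : ℕ} {J : Finset (Fin N)}
    (hJ : J.card = k + 1) (hk : 0 < k) {s t : ℝ} (hs : 0 ≤ s) (ht : 1 < t)
    (hts : (t - 1) * k = s * t) (S : ℕ → Finset (EuclideanSpace ℝ (Fin N)))
    (hsep : ∀ i : ℕ, 1 ≤ i →
      (S i : Set (EuclideanSpace ℝ (Fin N))).Pairwise ((2 : ℝ) ^ (-(t * i)) ≤ dist · ·))
    (hmax : ∀ i : ℕ, 1 ≤ i → ∀ T : Finset (EuclideanSpace ℝ (Fin N)),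
      ↑T ⊆ sphereJ N J ((2 : ℝ) ^ (-(i : ℝ))) →
      (T : Set (EuclideanSpace ℝ (Fin N))).Pairwise ((2 : ℝ) ^ (-(t * i)) ≤ dist · ·) →
      T.card ≤ (S i).card)
    {X : Set (EuclideanSpace ℝ (Fin N))} (hX : TotallyBounded X)
    (hSX : ∀ i : ℕ, 1 ≤ i → ↑(S i) ⊆ X) :
    ∃ c > 0, ∀ᶠ δ in 𝓝[>] 0, c * δ ^ (-s) ≤ coverNum X δ := by
  set ρ : ℝ := 2 ^ (-t)
  set q : ℝ := 2 ^ (t - 1)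
  have hρ : ∀ i : ℕ, ρ ^ i = 2 ^ (-(t * i)) := fun i => by
    rw [← Real.rpow_natCast, ← Real.rpow_mul zero_le_two, neg_mul]
  have hq : ∀ i : ℕ, (2 : ℝ) ^ (-(i : ℝ)) / 2 ^ (-(t * i)) = q ^ i := fun i => by
    rw [← Real.rpow_sub two_pos, ← Real.rpow_natCast, ← Real.rpow_mul zero_le_two]
    ring_nf
  -- `(rᵢ / ℓᵢ) ^ k = ℓᵢ ^ (-s)` is where `s = k (t - 1) / t` comes from
  have hqρ : ∀ i : ℕ, (q ^ i) ^ k = (ρ ^ i) ^ (-s) := fun i => by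
    rw [← Real.rpow_natCast, ← Real.rpow_natCast, ← Real.rpow_natCast, ← Real.rpow_mul zero_le_two,
      ← Real.rpow_mul zero_le_two, ← Real.rpow_mul zero_le_two, ← Real.rpow_mul zero_le_two]
    congr 1
    linear_combination (i : ℝ) * hts
  refine eventually_le_coverNum_of_pairwise_pow (ρ := ρ) (S := S) (c := 1 / (2 * k) ^ k) hX
    (by positivity) (Real.rpow_lt_one_of_one_lt_of_neg one_lt_two (by linarith)) (by positivity)
    hs ?_
  have hq1 : 1 < q := Real.one_lt_rpow one_lt_two (by linarith)
  filter_upwards [eventually_ge_atTop 1,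
    (tendsto_pow_atTop_atTop_of_one_lt hq1).eventually_ge_atTop (2 * k)] with i hi hqi
  have hℓ : (0 : ℝ) < 2 ^ (-(t * i)) := by positivity
  have hkℓ : 2 * k * (2 : ℝ) ^ (-(t * i)) ≤ 2 ^ (-(i : ℝ)) := by
    rwa [← le_div_iff₀ hℓ, hq]
  obtain ⟨T, hT, hTsep, hTcard⟩ := exists_pairwise_sphereJ_card_ge hJ hk hℓ hkℓ
  refine ⟨hSX i hi, hρ i ▸ hsep i hi, ?_⟩
  calc 1 / (2 * k) ^ k * (ρ ^ i) ^ (-s)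
      = ((2 : ℝ) ^ (-(i : ℝ)) / (2 * k * 2 ^ (-(t * i)))) ^ k := by
        rw [← hqρ, ← hq, mul_comm (2 * (k : ℝ)), ← div_div, div_pow (_ / _)]
        ring
    _ ≤ T.card := hTcard
    _ ≤ (S i).card := by exact_mod_cast hmax i hi T hT hTsep

theorem eventually_coverNum_le_of_sphereJ_nets {N k : ℕ} {s t : ℝ} (hs : 0 ≤ s) (ht : 1 < t)
    (hts : (t - 1) * k = s * t) (XJ : Finset (Fin N) → ℕ → Finset (EuclideanSpace ℝ (Fin N)))
    (hsub : ∀ J : Finset (Fin N), J.card = k + 1 → ∀ i : ℕ, 1 ≤ i →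
      ↑(XJ J i) ⊆ sphereJ N J ((2 : ℝ) ^ (-(i : ℝ))))
    (hsep : ∀ J : Finset (Fin N), J.card = k + 1 → ∀ i : ℕ, 1 ≤ i →
      (XJ J i : Set (EuclideanSpace ℝ (Fin N))).Pairwise ((2 : ℝ) ^ (-(t * i)) ≤ dist · ·))
    {X : Set (EuclideanSpace ℝ (Fin N))}
    (hX : X ⊆ ⋃ J ∈ {J : Finset (Fin N) | J.card = k + 1},
      ((⋃ i ∈ {i : ℕ | 1 ≤ i}, (XJ J i : Set (EuclideanSpace ℝ (Fin N)))) ∪ {0})) :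
    ∃ B > 0, ∀ᶠ δ in 𝓝[>] 0, (coverNum X δ : ℝ) ≤ B * -Real.log δ * δ ^ (-s) := by
  classical
  set 𝒥 := (Finset.univ : Finset (Finset (Fin N))).filter (·.card = k + 1)
  set C : ℝ := 2 * (k + 1) * 3 ^ k
  refine ⟨(1 + 𝒥.card * C) / Real.log 2, by positivity, ?_⟩
  filter_upwards [Ioo_mem_nhdsGT (by norm_num : (0 : ℝ) < 1 / 2)] with δ ⟨hδ0, hδ⟩
  set m := ⌊Real.logb 2 δ⁻¹⌋₊
  have hlevel := le_two_rpow_neg_iff_le_floor_logb hδ0 (by linarith)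
  have hXcov : X ⊆ closedBall 0 δ ∪
      ⋃ p ∈ 𝒥 ×ˢ Finset.Icc 1 m, (XJ p.1 p.2 : Set (EuclideanSpace ℝ (Fin N))) := by
    intro x hx
    obtain ⟨J, hJ, hxJ⟩ := mem_iUnion₂.1 (hX hx)
    rcases hxJ with hxJ | hx0
    · obtain ⟨j, hj, hxj⟩ := mem_iUnion₂.1 hxJ
      by_cases hjm : j ≤ m
      · exact Or.inr (mem_iUnion₂.2 ⟨(J, j), Finset.mem_product.2
          ⟨Finset.mem_filter.2 ⟨Finset.mem_univ _, hJ⟩, Finset.mem_Icc.2 ⟨hj, hjm⟩⟩, hxj⟩)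
      · refine Or.inl ?_
        rw [mem_closedBall, dist_zero_right,
          norm_eq_of_mem_sphereJ (by positivity) (hsub J hJ j hj hxj)]
        exact (not_le.1 (mt (hlevel j).1 hjm)).le
    · exact Or.inl (mem_singleton_iff.1 hx0 ▸ mem_closedBall_self hδ0.le)
  have hm : (m : ℝ) ≤ -Real.log δ / Real.log 2 := by
    rw [← Real.log_inv, ← Real.logb]
    exact Nat.floor_le (Real.logb_nonneg one_lt_two ((one_le_inv₀ hδ0).2 (by linarith)))
  have hL1 : 1 ≤ -Real.log δ / Real.log 2 := by
    rw [le_div_iff₀ (Real.log_pos one_lt_two), one_mul, ← Real.log_inv]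
    exact Real.log_le_log two_pos (by rw [le_inv_comm₀ two_pos hδ0]; linarith)
  have hδs : 1 ≤ δ ^ (-s) :=
    Real.one_le_rpow_of_pos_of_le_one_of_nonpos hδ0 (by linarith) (neg_nonpos.2 hs)
  calc (coverNum X δ : ℝ) ≤ 1 + (𝒥 ×ˢ Finset.Icc 1 m).card * (C * δ ^ (-s)) := by
        refine coverNum_le_of_subset_closedBall_union hXcov fun p hp => ?_
        obtain ⟨hJ, hj⟩ := Finset.mem_product.1 hp
        rw [Finset.mem_filter] at hJ
        rw [Finset.mem_Icc] at hj
        exact exists_cover_card_le_of_sphereJ_net hJ.2 hs ht hts (hsub _ hJ.2 _ hj.1)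
          (hsep _ hJ.2 _ hj.1) hδ0 ((hlevel _).2 hj.2)
    _ = 1 + 𝒥.card * m * (C * δ ^ (-s)) := by simp
    _ ≤ -Real.log δ / Real.log 2 * δ ^ (-s) +
          𝒥.card * (-Real.log δ / Real.log 2) * (C * δ ^ (-s)) :=
        add_le_add (one_le_mul_of_one_le_of_one_le hL1 hδs) (by gcongr)
    _ = (1 + 𝒥.card * C) / Real.log 2 * -Real.log δ * δ ^ (-s) := by ring

theorem box_dims_of_sphere_nets_general (N k : ℕ) (hkN : k + 1 ≤ N)
    (s : ℝ) (hs : s ∈ Set.Ioo 0 (k : ℝ)) (t : ℝ) (ht : t = (k : ℝ) / ((k : ℝ) - s))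
    (XJ : Finset (Fin N) → ℕ → Finset (EuclideanSpace ℝ (Fin N)))
    (hsub : ∀ J : Finset (Fin N), J.card = k + 1 → ∀ i : ℕ, 1 ≤ i →
      ∀ p ∈ XJ J i, p ∈ sphereJ N J ((2 : ℝ) ^ (-(i : ℝ))))
    (hsep : ∀ J : Finset (Fin N), J.card = k + 1 → ∀ i : ℕ, 1 ≤ i →
      ∀ p ∈ XJ J i, ∀ q ∈ XJ J i, p ≠ q → (2 : ℝ) ^ (-(t * i)) ≤ dist p q)
    (hmax : ∀ J : Finset (Fin N), J.card = k + 1 → ∀ i : ℕ, 1 ≤ i →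
      ∀ T : Finset (EuclideanSpace ℝ (Fin N)),
        (∀ p ∈ T, p ∈ sphereJ N J ((2 : ℝ) ^ (-(i : ℝ)))) →
        (∀ p ∈ T, ∀ q ∈ T, p ≠ q → (2 : ℝ) ^ (-(t * i)) ≤ dist p q) →
        T.card ≤ (XJ J i).card)
    (X : Set (EuclideanSpace ℝ (Fin N)))
    (hXdef : X = ⋃ J ∈ {J : Finset (Fin N) | J.card = k + 1},
      ((⋃ i ∈ {i : ℕ | 1 ≤ i}, (XJ J i : Set (EuclideanSpace ℝ (Fin N)))) ∪ {0})) :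
    lowerBoxDim X = s ∧ upperBoxDim X = s := by
  obtain ⟨hs0, hsk⟩ := hs
  have hk : 0 < k := by exact_mod_cast hs0.trans hsk
  have ht1 : 1 < t := by rw [ht, one_lt_div (by linarith)]; linarith
  have hts : (t - 1) * k = s * t := by rw [ht]; field_simp; ring
  obtain ⟨J₀, -, hJ₀⟩ := Finset.exists_subset_card_eq (s := (Finset.univ : Finset (Fin N)))
    (n := k + 1) (by simpa using hkN)
  have hXJ₀ : ∀ i, 1 ≤ i → ↑(XJ J₀ i) ⊆ X := fun i hi x hx => by
    rw [hXdef]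
    exact mem_iUnion₂.2 ⟨J₀, hJ₀, Or.inl (mem_iUnion₂.2 ⟨i, hi, hx⟩)⟩
  have hXball : X ⊆ closedBall 0 1 := by
    rw [hXdef]
    refine iUnion₂_subset fun J hJ => union_subset (iUnion₂_subset fun i hi x hx => ?_) ?_
    · rw [mem_closedBall, dist_zero_right,
        norm_eq_of_mem_sphereJ (by positivity) (hsub J hJ i hi x hx)]
      exact Real.rpow_le_one_of_one_le_of_nonpos one_le_two (by simp)
    · simp
  obtain ⟨c, hc, hlow⟩ := eventually_le_coverNum_of_sphereJ_nets hJ₀ hk hs0.le ht1 hts (XJ J₀)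
    (hsep J₀ hJ₀) (hmax J₀ hJ₀) ((isCompact_closedBall 0 1).totallyBounded.subset hXball) hXJ₀
  obtain ⟨B, hB, hup⟩ :=
    eventually_coverNum_le_of_sphereJ_nets hs0.le ht1 hts XJ hsub hsep hXdef.subset
  have h := tendsto_log_div_neg_log hc hB hlow hup
  exact ⟨h.liminf_eq, h.limsup_eq⟩

/-- part of Lemma 6.3 / Proposition 6.2(ii): for `0 < s < k`,
`t = k/(k-s)`, `rᵢ = 2^{-i}`, `ℓᵢ = 2^{-ti}`, choose for each `(k+1)`-element
`J ⊆ {1,…,N}` and each `i ≥ 1` a maximal `ℓᵢ`-separated subset `X_{J,i}` of the sphere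
`rᵢ S_J`; set `X_J = ⋃ᵢ X_{J,i} ∪ {0}` and `X = ⋃_J X_J`.  Then the lower and upper
box-counting dimensions of `X` both equal `s = k(t-1)/t`. -/
theorem box_dims_of_sphere_nets (N k : ℕ) (hk : 1 ≤ k) (hkN : k + 1 ≤ N)
    (s : ℝ) (hs : s ∈ Set.Ioo 0 (k : ℝ)) (t : ℝ) (ht : t = (k : ℝ) / ((k : ℝ) - s))
    (XJ : Finset (Fin N) → ℕ → Finset (EuclideanSpace ℝ (Fin N)))
    (hsub : ∀ J : Finset (Fin N), J.card = k + 1 → ∀ i : ℕ, 1 ≤ i →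
      ∀ p ∈ XJ J i, p ∈ sphereJ N J ((2 : ℝ) ^ (-(i : ℝ))))
    (hsep : ∀ J : Finset (Fin N), J.card = k + 1 → ∀ i : ℕ, 1 ≤ i →
      ∀ p ∈ XJ J i, ∀ q ∈ XJ J i, p ≠ q → (2 : ℝ) ^ (-(t * i)) ≤ dist p q)
    (hmax : ∀ J : Finset (Fin N), J.card = k + 1 → ∀ i : ℕ, 1 ≤ i →
      ∀ T : Finset (EuclideanSpace ℝ (Fin N)),
        (∀ p ∈ T, p ∈ sphereJ N J ((2 : ℝ) ^ (-(i : ℝ)))) →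
        (∀ p ∈ T, ∀ q ∈ T, p ≠ q → (2 : ℝ) ^ (-(t * i)) ≤ dist p q) →
        T.card ≤ (XJ J i).card)
    (X : Set (EuclideanSpace ℝ (Fin N)))
    (hXdef : X = ⋃ J ∈ {J : Finset (Fin N) | J.card = k + 1},
      ((⋃ i ∈ {i : ℕ | 1 ≤ i}, (XJ J i : Set (EuclideanSpace ℝ (Fin N)))) ∪ {0})) :
    lowerBoxDim X = s ∧ upperBoxDim X = s :=
  box_dims_of_sphere_nets_general N k hkN s hs t ht XJ hsub hsep hmax X hXdef
end
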